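/- arXiv:2206.15028 — 4 statements merged into one kernel-verified Lean document; each statement's English description precedes it below -/
import Mathlib

section
/- Let X be a sesquiclosed coherent configuration and φ : X → X' a sesquiclosed algebraic isomorphism. Then the coherent configuration X' is sesquiclosed. -/
open Set

universe u

/-- A coherent configuration on a finite set `Ω`: a partition `S` of `Ω × Ω`
satisfying (C1) the diagonal is a union of classes, (C2) closure under converse,
(C3) well-defined intersection numbers. -/
structure CohCfg (Ω : Type u) : Type u where
  S : Set (Set (Ω × Ω))
  finite : Finite Ω
  cover : ∀ p : Ω × Ω, ∃ s ∈ S, p ∈ s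
  disj : ∀ s ∈ S, ∀ t ∈ S, s ≠ t → s ∩ t = ∅
  nonemp : ∀ s ∈ S, s.Nonempty
  diag : ∀ s ∈ S, (∃ p ∈ s, p.1 = p.2) → ∀ p ∈ s, p.1 = p.2
  conv : ∀ s ∈ S, {p : Ω × Ω | (p.2, p.1) ∈ s} ∈ S
  inum : ∀ r ∈ S, ∀ s ∈ S, ∀ t ∈ S, ∀ p ∈ t, ∀ q ∈ t,
    {γ : Ω | (p.1, γ) ∈ r ∧ (γ, p.2) ∈ s}.ncard =
    {γ : Ω | (q.1, γ) ∈ r ∧ (γ, q.2) ∈ s}.ncard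

namespace CohCfg

variable {Ω Ω' : Type u}

/-- The intersection number `c^t_{rs}` computed at the pair `p`. -/
noncomputable def cnum (r s : Set (Ω × Ω)) (p : Ω × Ω) : ℕ :=
  {γ : Ω | (p.1, γ) ∈ r ∧ (γ, p.2) ∈ s}.ncard

/-- `X` is a scheme (homogeneous) if the full diagonal is a basis relation. -/
def IsScheme (X : CohCfg Ω) : Prop := {p : Ω × Ω | p.1 = p.2} ∈ X.S

/-- Commutativity: `c^t_{rs} = c^t_{sr}`. -/
def IsCommutative (X : CohCfg Ω) : Prop :=
  ∀ r ∈ X.S, ∀ s ∈ X.S, ∀ p : Ω × Ω, cnum r s p = cnum s r p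

/-- `s` is a relation of `X`, i.e. a union of basis relations. -/
def IsRelationOf (X : CohCfg Ω) (s : Set (Ω × Ω)) : Prop :=
  ∀ t ∈ X.S, (t ∩ s).Nonempty → t ⊆ s

/-- `X ≤ Y`: every (basis) relation of `X` is a relation of `Y`. -/
def le (X Y : CohCfg Ω) : Prop := ∀ s ∈ X.S, IsRelationOf Y s

/-- The diagonal relation `1_Δ` of a subset `Δ`. -/
def diagRel (Δ : Set Ω) : Set (Ω × Ω) := {p | p.1 = p.2 ∧ p.1 ∈ Δ}

/-- `Δ` is a fiber of `X`. -/
def IsFiber (X : CohCfg Ω) (Δ : Set Ω) : Prop := diagRel Δ ∈ X.S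

/-- `αs = {β | (α,β) ∈ s}`. -/
def pointSet (s : Set (Ω × Ω)) (α : Ω) : Set Ω := {β | (α, β) ∈ s}

/-- `X` is partly regular: some point `α` has `|αs| ≤ 1` for all basis relations. -/
def PartlyRegular (X : CohCfg Ω) : Prop :=
  ∃ α : Ω, ∀ s ∈ X.S, (pointSet s α).ncard ≤ 1

/-- The image `s^f` of a relation under a map of points. -/
def relImage (f : Ω → Ω') (s : Set (Ω × Ω)) : Set (Ω' × Ω') :=
  (fun p : Ω × Ω => (f p.1, f p.2)) '' s

/-- `φ` is an algebraic isomorphism from `X` to `X'`. -/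
structure IsAlgIso (X : CohCfg Ω) (X' : CohCfg Ω')
    (φ : Set (Ω × Ω) → Set (Ω' × Ω')) : Prop where
  bijOn : Set.BijOn φ X.S X'.S
  cnum_eq : ∀ r ∈ X.S, ∀ s ∈ X.S, ∀ t ∈ X.S, ∀ p ∈ t, ∀ q ∈ φ t,
    cnum r s p = cnum (φ r) (φ s) q

/-- The natural extension of an algebraic isomorphism to unions of basis relations. -/
def algImage (X : CohCfg Ω) (φ : Set (Ω × Ω) → Set (Ω' × Ω')) (s : Set (Ω × Ω)) :
    Set (Ω' × Ω') := ⋃₀ (φ '' {t | t ∈ X.S ∧ t ⊆ s})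

/-- The image `Δ^φ` of a fiber under an algebraic isomorphism. -/
def fiberImage (X : CohCfg Ω) (φ : Set (Ω × Ω) → Set (Ω' × Ω')) (Δ : Set Ω) : Set Ω' :=
  {α' | (α', α') ∈ φ (diagRel Δ)}

/-- `Y` is the point extension `X_α`: the smallest coherent configuration `≥ X`
having `1_α` as a basis relation. -/
def IsPointExt (X : CohCfg Ω) (α : Ω) (Y : CohCfg Ω) : Prop :=
  le X Y ∧ ({(α, α)} : Set (Ω × Ω)) ∈ Y.S ∧
    ∀ Z : CohCfg Ω, le X Z → ({(α, α)} : Set (Ω × Ω)) ∈ Z.S → le Y Z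

/-- `φ` has an `(α,α')`-extension: an algebraic isomorphism `X_α → X'_{α'}`
extending `φ` and sending `1_α` to `1_{α'}`. -/
def HasExtension (X : CohCfg Ω) (X' : CohCfg Ω') (φ : Set (Ω × Ω) → Set (Ω' × Ω'))
    (α : Ω) (α' : Ω') : Prop :=
  ∃ (Y : CohCfg Ω) (Y' : CohCfg Ω') (ψ : Set (Ω × Ω) → Set (Ω' × Ω')),
    IsPointExt X α Y ∧ IsPointExt X' α' Y' ∧ IsAlgIso Y Y' ψ ∧
    (∀ s ∈ X.S, algImage Y ψ s = φ s) ∧ ψ {(α, α)} = {(α', α')}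

/-- A sesquiclosed algebraic isomorphism: has an `(α,α')`-extension for all
`α ∈ Δ ∈ F(X)` and `α' ∈ Δ^φ`. -/
def SesquiclosedIso (X : CohCfg Ω) (X' : CohCfg Ω')
    (φ : Set (Ω × Ω) → Set (Ω' × Ω')) : Prop :=
  IsAlgIso X X' φ ∧
  ∀ Δ : Set Ω, IsFiber X Δ → ∀ α ∈ Δ, ∀ α' ∈ fiberImage X φ Δ, HasExtension X X' φ α α'

/-- `φ` is induced by the combinatorial isomorphism `f`. -/
def InducedBy (X : CohCfg Ω) (X' : CohCfg Ω') (φ : Set (Ω × Ω) → Set (Ω' × Ω'))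
    (f : Ω → Ω') : Prop :=
  Function.Bijective f ∧ ∀ s ∈ X.S, φ s = relImage f s

/-- `X` is separable: every algebraic isomorphism from `X` is induced by an isomorphism. -/
def Separable (X : CohCfg Ω) : Prop :=
  ∀ (Ω'' : Type u) (X' : CohCfg Ω'') (φ : Set (Ω × Ω) → Set (Ω'' × Ω'')),
    IsAlgIso X X' φ → ∃ f : Ω → Ω'', InducedBy X X' φ f

/-- `X` is sesquiseparable: every sesquiclosed algebraic isomorphism from `X`
is induced by an isomorphism. -/
def Sesquiseparable (X : CohCfg Ω) : Prop :=
  ∀ (Ω'' : Type u) (X' : CohCfg Ω'') (φ : Set (Ω × Ω) → Set (Ω'' × Ω'')),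
    SesquiclosedIso X X' φ → ∃ f : Ω → Ω'', InducedBy X X' φ f

/-- A sesquiclosed coherent configuration: (S1) the fibers of every one-point
extension `X_α` are the nonempty sets `αs`, and (S2) the identity algebraic
automorphism is sesquiclosed. -/
def SesquiclosedCfg (X : CohCfg Ω) : Prop :=
  (∀ α : Ω, ∀ Y : CohCfg Ω, IsPointExt X α Y →
     ∀ Δ : Set Ω, (IsFiber Y Δ ↔ ∃ s ∈ X.S, Δ = pointSet s α ∧ Δ.Nonempty)) ∧
  SesquiclosedIso X X id

/-- A parabolic of `X`: a relation that is an equivalence relation on `Ω`. -/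
def IsParabolic (X : CohCfg Ω) (e : Set (Ω × Ω)) : Prop :=
  IsRelationOf X e ∧ (∀ a : Ω, (a, a) ∈ e) ∧ (∀ p ∈ e, (p.2, p.1) ∈ e) ∧
    ∀ a b c : Ω, (a, b) ∈ e → (b, c) ∈ e → (a, c) ∈ e

/-- The class of `a` modulo the equivalence relation `e`. -/
def eClass (e : Set (Ω × Ω)) (a : Ω) : Set Ω := {b | (a, b) ∈ e}

/-- `Δ/e` is a section of `X`: `e` is a parabolic and `Δ` is a class of a
parabolic containing `e`. -/
def IsSection (X : CohCfg Ω) (Δ : Set Ω) (e : Set (Ω × Ω)) : Prop :=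
  IsParabolic X e ∧ ∃ d : Set (Ω × Ω), IsParabolic X d ∧ e ⊆ d ∧ ∃ a : Ω, Δ = eClass d a

/-- The point set of the section `Δ/e`: the `e`-classes of points of `Δ`. -/
abbrev Sec (Δ : Set Ω) (e : Set (Ω × Ω)) : Type u :=
  {Γ : Set Ω // ∃ a ∈ Δ, Γ = eClass e a}

/-- The relation `s_𝔖` on the section `𝔖 = Δ/e`. -/
def secRel (Δ : Set Ω) (e : Set (Ω × Ω)) (s : Set (Ω × Ω)) :
    Set (Sec Δ e × Sec Δ e) :=
  {p | ∃ a ∈ p.1.1, ∃ b ∈ p.2.1, (a, b) ∈ s}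

/-- `Y` is the coherent configuration `X_𝔖` on the section `𝔖 = Δ/e`. -/
def IsSectionCfg (X : CohCfg Ω) (Δ : Set Ω) (e : Set (Ω × Ω))
    (Y : CohCfg (Sec Δ e)) : Prop :=
  Y.S = {t | ∃ s ∈ X.S, t = secRel Δ e s ∧ t.Nonempty}

/-- The restriction `s_Δ` of a relation to a subset `Δ`. -/
def restRel (Δ : Set Ω) (s : Set (Ω × Ω)) : Set (↥Δ × ↥Δ) := {p | (p.1.1, p.2.1) ∈ s}

/-- `Y` is the restriction `X_Δ` of `X` to `Δ`. -/
def IsRestrictionCfg (X : CohCfg Ω) (Δ : Set Ω) (Y : CohCfg ↥Δ) : Prop :=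
  Y.S = {t | ∃ s ∈ X.S, t = restRel Δ s ∧ t.Nonempty}

/-- `Iso(X, X', φ)`: isomorphisms inducing the algebraic isomorphism `φ`. -/
def IsoSet (X : CohCfg Ω) (X' : CohCfg Ω') (φ : Set (Ω × Ω) → Set (Ω' × Ω')) :
    Set (Ω → Ω') :=
  {f | Function.Bijective f ∧ ∀ s ∈ X.S, relImage f s = φ s}

/-- `X` is schurian: its basis relations are the orbits of `Aut(X)` on `Ω × Ω`. -/
def Schurian (X : CohCfg Ω) : Prop :=
  ∀ s ∈ X.S, ∀ p ∈ s, ∀ q ∈ s, ∃ f : Ω → Ω,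
    (Function.Bijective f ∧ ∀ t ∈ X.S, relImage f t = t) ∧ (f p.1, f p.2) = q

/-- `e ⊆ rad(s)`: `s` is a union of products of pairs of `e`-classes it meets. -/
def RadGE (e s : Set (Ω × Ω)) : Prop :=
  ∀ p ∈ s, ∀ a b : Ω, (p.1, a) ∈ e → (p.2, b) ∈ e → (a, b) ∈ s

/-- The `e₁/e₀`-condition: every basis relation disjoint from `e₁` has `e₀` in
its radical. -/
def WedgeCond (X : CohCfg Ω) (e0 e1 : Set (Ω × Ω)) : Prop :=
  ∀ s ∈ X.S, s ∩ e1 = ∅ → RadGE e0 s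

/-- A circulant coherent configuration on a group `G`: right translations are
automorphisms. -/
def IsCirculant {G : Type u} [Group G] (X : CohCfg G) : Prop :=
  ∀ g : G, ∀ s ∈ X.S, relImage (fun x => x * g) s = s

/-- The equivalence relation `e(H)` whose classes are the cosets of `H`. -/
def eRelSet {G : Type u} [Group G] (H : Subgroup G) : Set (G × G) :=
  {p | p.1⁻¹ * p.2 ∈ H}

/-- `H` is an `X`-group. -/
def IsXGroup {G : Type u} [Group G] (X : CohCfg G) (H : Subgroup G) : Prop :=
  IsParabolic X (eRelSet H)

/-- A normal circulant scheme: every automorphism fixing the identity is a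
group automorphism. -/
def IsNormalCirc {G : Type u} [Group G] (X : CohCfg G) : Prop :=
  ∀ f : G → G, Function.Bijective f → (∀ s ∈ X.S, relImage f s = s) → f 1 = 1 →
    ∀ a b : G, f (a * b) = f a * f b

/-- Normality of a circulant scheme presented on a section `Δ/e` of a group `G`
(the points are cosets): every automorphism fixing the class of `1` respects the
coset multiplication. -/
def IsNormalSec {G : Type u} [Group G] (Δ : Set G) (e : Set (G × G))
    (Y : CohCfg (Sec Δ e)) : Prop :=
  ∀ F : Sec Δ e → Sec Δ e, Function.Bijective F → (∀ t ∈ Y.S, relImage F t = t) →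
    (∀ Γ : Sec Δ e, (1 : G) ∈ Γ.1 → F Γ = Γ) →
    ∀ Γ Γ' Γ'' : Sec Δ e, Γ''.1 = Set.image2 (· * ·) Γ.1 Γ'.1 →
      (F Γ'').1 = Set.image2 (· * ·) (F Γ).1 (F Γ').1

/-- Normality of a circulant scheme presented on (the subtype of) a subgroup `U ⊆ G`. -/
def IsNormalRest {G : Type u} [Group G] (U : Set G) (Y : CohCfg ↥U) : Prop :=
  ∀ F : ↥U → ↥U, Function.Bijective F → (∀ t ∈ Y.S, relImage F t = t) →
    (∀ x : ↥U, x.1 = 1 → F x = x) →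
    ∀ x y z : ↥U, z.1 = x.1 * y.1 → (F z).1 = (F x).1 * (F y).1

/-- `N` is an `X_U`-group: `N ≤ U` and the restriction of `e(N)` to `U` is a
relation of the restriction `X_U`. -/
def SubXGroup {G : Type u} [Group G] (X : CohCfg G) (U N : Subgroup G) : Prop :=
  N ≤ U ∧ ∀ s ∈ X.S, (∃ p ∈ s, p.1 ∈ U ∧ p.2 ∈ U ∧ p.1⁻¹ * p.2 ∈ N) →
    ∀ p ∈ s, p.1 ∈ U → p.2 ∈ U → p.1⁻¹ * p.2 ∈ N

end CohCfg


section SesquiHelpers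

open CohCfg

variable {Ω Ω' : Type u}

private lemma cnum_ne_zero_iff [Finite Ω] (r s : Set (Ω × Ω)) (p : Ω × Ω) :
    cnum r s p ≠ 0 ↔ {γ : Ω | (p.1, γ) ∈ r ∧ (γ, p.2) ∈ s}.Nonempty := by
  unfold cnum
  rw [ne_eq, Set.ncard_eq_zero (Set.toFinite _), ← ne_eq, ← Set.nonempty_iff_ne_empty]

private lemma cnum_point (α : Ω) (u : Set (Ω × Ω)) (q : Ω × Ω)
    (hq : q ∈ u) (hq1 : q.1 = α) : cnum {(α, α)} u q = 1 := by
  have h : {γ : Ω | (q.1, γ) ∈ ({(α, α)} : Set (Ω × Ω)) ∧ (γ, q.2) ∈ u} = {α} := by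
    ext γ
    simp only [Set.mem_setOf_eq, Set.mem_singleton_iff, Prod.mk.injEq]
    constructor
    · rintro ⟨⟨-, rfl⟩, -⟩; rfl
    · intro hγ
      refine ⟨⟨hq1, hγ⟩, ?_⟩
      have h2 : (α, q.2) = q := Prod.ext_iff.mpr ⟨hq1.symm, rfl⟩
      rw [hγ, h2]; exact hq
  rw [cnum, h, Set.ncard_singleton]

private lemma start_fwd {Y : CohCfg Ω} {Y' : CohCfg Ω'}
    {ψ : Set (Ω × Ω) → Set (Ω' × Ω')} (hY : IsAlgIso Y Y' ψ)
    {α : Ω} {α' : Ω'} (hα : ({(α, α)} : Set (Ω × Ω)) ∈ Y.S)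
    (hψα : ψ {(α, α)} = {(α', α')})
    {u : Set (Ω × Ω)} (hu : u ∈ Y.S)
    (h : ∃ p ∈ u, p.1 = α) : ∀ q ∈ ψ u, q.1 = α' := by
  haveI := Y'.finite
  obtain ⟨p₀, hp₀, hp₀1⟩ := h
  intro q hq
  have h1 : cnum {(α, α)} u p₀ = 1 := cnum_point α u p₀ hp₀ hp₀1
  have h2 := hY.cnum_eq _ hα u hu u hu p₀ hp₀ q hq
  rw [hψα, h1] at h2
  obtain ⟨γ', hγ1, -⟩ := (cnum_ne_zero_iff _ _ _).mp (by rw [← h2]; exact one_ne_zero)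
  have h3 : (q.1, γ') = (α', α') := Set.mem_singleton_iff.mp hγ1
  exact congrArg Prod.fst h3

private lemma start_bwd {Y : CohCfg Ω} {Y' : CohCfg Ω'}
    {ψ : Set (Ω × Ω) → Set (Ω' × Ω')} (hY : IsAlgIso Y Y' ψ)
    {α : Ω} {α' : Ω'} (hα : ({(α, α)} : Set (Ω × Ω)) ∈ Y.S)
    (hψα : ψ {(α, α)} = {(α', α')})
    {u : Set (Ω × Ω)} (hu : u ∈ Y.S)
    (h : ∃ q ∈ ψ u, q.1 = α') : ∀ p ∈ u, p.1 = α := by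
  haveI := Y.finite
  obtain ⟨q₀, hq₀, hq₀1⟩ := h
  intro p hp
  have h1 : cnum {(α', α')} (ψ u) q₀ = 1 := cnum_point α' (ψ u) q₀ hq₀ hq₀1
  have h2 := hY.cnum_eq _ hα u hu u hu p hp q₀ hq₀
  rw [hψα, h1] at h2
  obtain ⟨γ, hγ1, -⟩ := (cnum_ne_zero_iff _ _ _).mp (by rw [h2]; exact one_ne_zero)
  have h3 : (p.1, γ) = (α, α) := Set.mem_singleton_iff.mp hγ1
  exact congrArg Prod.fst h3

private lemma diag_of_cnum_zero (Z : CohCfg Ω) {e : Set (Ω × Ω)} (he : e ∈ Z.S)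
    (h : ∀ r ∈ Z.S, ∀ t ∈ Z.S, t ≠ r → ∀ p ∈ t, cnum e r p = 0) :
    ∀ p ∈ e, p.1 = p.2 := by
  haveI := Z.finite
  obtain ⟨⟨a, b⟩, hab⟩ := Z.nonemp e he
  obtain ⟨t, ht, hat⟩ := Z.cover (a, a)
  have he' : {p : Ω × Ω | (p.2, p.1) ∈ e} ∈ Z.S := Z.conv e he
  have hne : cnum e {p : Ω × Ω | (p.2, p.1) ∈ e} (a, a) ≠ 0 := by
    rw [cnum_ne_zero_iff]
    exact ⟨b, hab, hab⟩
  have hte : t = {p : Ω × Ω | (p.2, p.1) ∈ e} := by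
    by_contra hne2
    exact hne (h _ he' t ht hne2 (a, a) hat)
  have haa : (a, a) ∈ e := by
    have h2 : (a, a) ∈ {p : Ω × Ω | (p.2, p.1) ∈ e} := hte ▸ hat
    exact h2
  exact Z.diag e he ⟨(a, a), haa, rfl⟩

private lemma cnum_zero_of_diag (Z : CohCfg Ω) {e : Set (Ω × Ω)}
    (hd : ∀ p ∈ e, p.1 = p.2) :
    ∀ r ∈ Z.S, ∀ t ∈ Z.S, t ≠ r → ∀ p ∈ t, cnum e r p = 0 := by
  intro r hr t ht hne p hp
  haveI := Z.finite
  by_contra h0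
  obtain ⟨γ, hγ1, hγ2⟩ := (cnum_ne_zero_iff _ _ _).mp h0
  have h1 : p.1 = γ := hd _ hγ1
  have h2 : p ∈ r := by
    have h3 : (p.1, p.2) = p := rfl
    rw [← h3, h1]; exact hγ2
  have hdisj := Z.disj t ht r hr hne
  exact absurd (Set.mem_inter hp h2) (by rw [hdisj]; exact Set.notMem_empty p)

private lemma diag_image {Y : CohCfg Ω} {Y' : CohCfg Ω'}
    {ψ : Set (Ω × Ω) → Set (Ω' × Ω')} (h : IsAlgIso Y Y' ψ)
    {e : Set (Ω × Ω)} (he : e ∈ Y.S) (hd : ∀ p ∈ e, p.1 = p.2) :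
    ∀ p ∈ ψ e, p.1 = p.2 := by
  apply diag_of_cnum_zero Y' (h.bijOn.mapsTo he)
  intro r' hr' t' ht' hne p hp
  obtain ⟨r, hr, rfl⟩ := h.bijOn.surjOn hr'
  obtain ⟨t, htS, rfl⟩ := h.bijOn.surjOn ht'
  obtain ⟨p₀, hp₀⟩ := Y.nonemp t htS
  rw [← h.cnum_eq e he r hr t htS p₀ hp₀ p hp]
  exact cnum_zero_of_diag Y hd r hr t htS (fun h2 => hne (by rw [h2])) p₀ hp₀

private lemma diag_preimage {Y : CohCfg Ω} {Y' : CohCfg Ω'}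
    {ψ : Set (Ω × Ω) → Set (Ω' × Ω')} (h : IsAlgIso Y Y' ψ)
    {e : Set (Ω × Ω)} (he : e ∈ Y.S) (hd : ∀ p ∈ ψ e, p.1 = p.2) :
    ∀ p ∈ e, p.1 = p.2 := by
  apply diag_of_cnum_zero Y he
  intro r hr t ht hne p hp
  obtain ⟨q, hq⟩ := Y'.nonemp (ψ t) (h.bijOn.mapsTo ht)
  rw [h.cnum_eq e he r hr t ht p hp q hq]
  exact cnum_zero_of_diag Y' hd (ψ r) (h.bijOn.mapsTo hr) (ψ t) (h.bijOn.mapsTo ht)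
    (fun h2 => hne (h.bijOn.injOn ht hr h2)) q hq

private lemma S_sub {Y1 Y2 : CohCfg Ω} (h12 : le Y1 Y2) (h21 : le Y2 Y1) :
    Y1.S ⊆ Y2.S := by
  intro s hs
  obtain ⟨p, hp⟩ := Y1.nonemp s hs
  obtain ⟨t, ht, hpt⟩ := Y2.cover p
  have h1 : t ⊆ s := h12 s hs t ht ⟨p, hpt, hp⟩
  have h2 : s ⊆ t := h21 t ht s hs ⟨p, hp, hpt⟩
  rw [Set.Subset.antisymm h2 h1]
  exact ht

private lemma pext_S_eq {X : CohCfg Ω} {α : Ω} {Y1 Y2 : CohCfg Ω}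
    (h1 : IsPointExt X α Y1) (h2 : IsPointExt X α Y2) : Y1.S = Y2.S := by
  have le12 : le Y1 Y2 := h1.2.2 Y2 h2.1 h2.2.1
  have le21 : le Y2 Y1 := h2.2.2 Y1 h1.1 h1.2.1
  exact Set.Subset.antisymm (S_sub le12 le21) (S_sub le21 le12)

private lemma diagRel_carrier {e : Set (Ω × Ω)} (hd : ∀ p ∈ e, p.1 = p.2) :
    diagRel {a : Ω | (a, a) ∈ e} = e := by
  ext p
  constructor
  · rintro ⟨h1, h2⟩
    have hpp : (p.1, p.1) = p := Prod.ext_iff.mpr ⟨rfl, h1⟩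
    exact hpp ▸ h2
  · intro hp
    have h1 : p.1 = p.2 := hd p hp
    have hpp : (p.1, p.1) = p := Prod.ext_iff.mpr ⟨rfl, h1⟩
    exact ⟨h1, show (p.1, p.1) ∈ e by rw [hpp]; exact hp⟩

private lemma carrier_diagRel (Δ : Set Ω) : {a : Ω | (a, a) ∈ diagRel Δ} = Δ := by
  ext a
  simp [diagRel]

private lemma key_pointSet {X Y : CohCfg Ω} {Y' : CohCfg Ω'}
    {ψ : Set (Ω × Ω) → Set (Ω' × Ω')} {α : Ω} {α' : Ω'}
    (hle : le X Y) (hY : IsAlgIso Y Y' ψ)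
    (hα : ({(α, α)} : Set (Ω × Ω)) ∈ Y.S) (hψα : ψ {(α, α)} = {(α', α')})
    {s : Set (Ω × Ω)} (hs : s ∈ X.S)
    (hfib : diagRel (pointSet s α) ∈ Y.S) :
    {a : Ω' | (a, a) ∈ ψ (diagRel (pointSet s α))} = pointSet (algImage Y ψ s) α' := by
  haveI := Y.finite
  haveI := Y'.finite
  have hψDdiag : ∀ p ∈ ψ (diagRel (pointSet s α)), p.1 = p.2 :=
    diag_image hY hfib (fun p hp => hp.1)
  ext b
  simp only [Set.mem_setOf_eq]
  constructor
  · intro hb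
    obtain ⟨p, hpD⟩ := Y.nonemp _ hfib
    have hβ : p.1 ∈ pointSet s α := hpD.2
    have hβs : (α, p.1) ∈ s := hβ
    obtain ⟨u, hu, hαβu⟩ := Y.cover (α, p.1)
    have hus : u ⊆ s := hle s hs u hu ⟨(α, p.1), hαβu, hβs⟩
    have hstart : ∀ q ∈ ψ u, q.1 = α' :=
      start_fwd hY hα hψα hu ⟨(α, p.1), hαβu, rfl⟩
    have hu' : {w : Ω × Ω | (w.2, w.1) ∈ u} ∈ Y.S := Y.conv u hu
    have hββD : (p.1, p.1) ∈ diagRel (pointSet s α) := ⟨rfl, hβ⟩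
    have hc : cnum {w : Ω × Ω | (w.2, w.1) ∈ u} u (p.1, p.1) ≠ 0 := by
      rw [cnum_ne_zero_iff]
      exact ⟨α, hαβu, hαβu⟩
    have hc' := hY.cnum_eq _ hu' u hu _ hfib (p.1, p.1) hββD (b, b) hb
    rw [hc'] at hc
    obtain ⟨γ', hγ1, hγ2⟩ := (cnum_ne_zero_iff _ _ _).mp hc
    have hγ1' : γ' = α' := hstart (γ', b) hγ2
    rw [hγ1'] at hγ2
    exact Set.mem_sUnion.mpr ⟨ψ u, Set.mem_image_of_mem ψ ⟨hu, hus⟩, hγ2⟩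
  · intro hb
    obtain ⟨t', ht'img, hmem⟩ := Set.mem_sUnion.mp hb
    obtain ⟨u, ⟨hu, hus⟩, rfl⟩ := ht'img
    have hstart : ∀ p ∈ u, p.1 = α :=
      start_bwd hY hα hψα hu ⟨(α', b), hmem, rfl⟩
    obtain ⟨p₀, hp₀⟩ := Y.nonemp u hu
    have hp2 : p₀.2 ∈ pointSet s α := by
      have h1 : (α, p₀.2) = p₀ := Prod.ext_iff.mpr ⟨(hstart p₀ hp₀).symm, rfl⟩
      show (α, p₀.2) ∈ s
      rw [h1]; exact hus hp₀
    have hc : cnum u (diagRel (pointSet s α)) p₀ ≠ 0 := by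
      rw [cnum_ne_zero_iff]
      exact ⟨p₀.2, hp₀, ⟨rfl, hp2⟩⟩
    have hc2 := hY.cnum_eq u hu _ hfib u hu p₀ hp₀ (α', b) hmem
    rw [hc2] at hc
    obtain ⟨γ', hγ1, hγ2⟩ := (cnum_ne_zero_iff _ _ _).mp hc
    have hgb : γ' = b := hψDdiag _ hγ2
    rw [hgb] at hγ2
    exact hγ2

private lemma fiber_pull {X : CohCfg Ω} {X' : CohCfg Ω'}
    {φ : Set (Ω × Ω) → Set (Ω' × Ω')} (hφiso : IsAlgIso X X' φ)
    {t' : Set (Ω' × Ω')} (ht' : t' ∈ X'.S) (hdp : ∃ p ∈ t', p.1 = p.2) :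
    ∃ Δ : Set Ω, IsFiber X Δ ∧ Δ.Nonempty ∧ φ (diagRel Δ) = t' ∧
      fiberImage X φ Δ = {a : Ω' | (a, a) ∈ t'} := by
  obtain ⟨e, heX, rfl⟩ := hφiso.bijOn.surjOn ht'
  have hed : ∀ p ∈ e, p.1 = p.2 := by
    apply diag_preimage hφiso heX
    exact X'.diag _ (hφiso.bijOn.mapsTo heX) hdp
  have hDe : diagRel {a : Ω | (a, a) ∈ e} = e := diagRel_carrier hed
  refine ⟨{a : Ω | (a, a) ∈ e}, ?_, ?_, ?_, ?_⟩
  · show diagRel {a : Ω | (a, a) ∈ e} ∈ X.S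
    rw [hDe]; exact heX
  · obtain ⟨p, hp⟩ := X.nonemp e heX
    refine ⟨p.1, ?_⟩
    show (p.1, p.1) ∈ e
    have hpp : (p.1, p.1) = p := Prod.ext_iff.mpr ⟨rfl, hed p hp⟩
    rw [hpp]; exact hp
  · rw [hDe]
  · show fiberImage X φ {a : Ω | (a, a) ∈ e} = {a : Ω' | (a, a) ∈ φ e}
    simp only [fiberImage, hDe]

private lemma compose_ext {X : CohCfg Ω} {X' : CohCfg Ω'}
    {φ : Set (Ω × Ω) → Set (Ω' × Ω')} (hφiso : IsAlgIso X X' φ)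
    {α : Ω} {α' α'' : Ω'}
    {Y1 Y2 : CohCfg Ω} {Y'1 Y'2 : CohCfg Ω'}
    {ψ1 ψ2 : Set (Ω × Ω) → Set (Ω' × Ω')}
    (hpe1 : IsPointExt X α Y1) (hpe2 : IsPointExt X α Y2)
    (hpe'1 : IsPointExt X' α' Y'1) (hpe'2 : IsPointExt X' α'' Y'2)
    (hiso1 : IsAlgIso Y1 Y'1 ψ1) (hiso2 : IsAlgIso Y2 Y'2 ψ2)
    (halg1 : ∀ s ∈ X.S, algImage Y1 ψ1 s = φ s)
    (halg2 : ∀ s ∈ X.S, algImage Y2 ψ2 s = φ s)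
    (hψα1 : ψ1 {(α, α)} = {(α', α')}) (hψα2 : ψ2 {(α, α)} = {(α'', α'')}) :
    HasExtension X' X' id α' α'' := by
  haveI : Nonempty (Set (Ω × Ω)) := ⟨∅⟩
  have hSeq : Y1.S = Y2.S := pext_S_eq hpe1 hpe2
  set g := Function.invFunOn ψ1 Y1.S with hg
  have hg_mem : ∀ t' ∈ Y'1.S, g t' ∈ Y1.S := by
    intro t' ht'
    obtain ⟨u, hu, hut⟩ := hiso1.bijOn.surjOn ht'
    exact Function.invFunOn_mem ⟨u, hu, hut⟩
  have hg_eq : ∀ t' ∈ Y'1.S, ψ1 (g t') = t' := by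
    intro t' ht'
    obtain ⟨u, hu, hut⟩ := hiso1.bijOn.surjOn ht'
    exact Function.invFunOn_eq ⟨u, hu, hut⟩
  have hg_left : ∀ u ∈ Y1.S, g (ψ1 u) = u := by
    intro u hu
    exact hiso1.bijOn.injOn (hg_mem _ (hiso1.bijOn.mapsTo hu)) hu
      (hg_eq _ (hiso1.bijOn.mapsTo hu))
  refine ⟨Y'1, Y'2, fun t => ψ2 (g t), hpe'1, hpe'2, ?_, ?_, ?_⟩
  · constructor
    · refine ⟨?_, ?_, ?_⟩
      · intro t' ht'
        exact hiso2.bijOn.mapsTo (hSeq ▸ hg_mem t' ht')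
      · intro a ha b hb heq
        have h1 : g a = g b :=
          hiso2.bijOn.injOn (hSeq ▸ hg_mem a ha) (hSeq ▸ hg_mem b hb) heq
        rw [← hg_eq a ha, ← hg_eq b hb, h1]
      · intro t'' ht''
        obtain ⟨u, hu, hut⟩ := hiso2.bijOn.surjOn ht''
        have hu1 : u ∈ Y1.S := hSeq ▸ hu
        refine ⟨ψ1 u, hiso1.bijOn.mapsTo hu1, ?_⟩
        show ψ2 (g (ψ1 u)) = t''
        rw [hg_left u hu1]; exact hut
    · intro r' hr' s' hs' t' ht' p hp q hq
      obtain ⟨p₀, hp₀⟩ := Y1.nonemp (g t') (hg_mem t' ht')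
      have e1 : cnum (g r') (g s') p₀ = cnum r' s' p := by
        have h2 := hiso1.cnum_eq (g r') (hg_mem r' hr') (g s') (hg_mem s' hs')
          (g t') (hg_mem t' ht') p₀ hp₀ p (by rw [hg_eq t' ht']; exact hp)
        rw [hg_eq r' hr', hg_eq s' hs'] at h2
        exact h2
      have e2 : cnum (g r') (g s') p₀ = cnum (ψ2 (g r')) (ψ2 (g s')) q :=
        hiso2.cnum_eq (g r') (hSeq ▸ hg_mem r' hr') (g s') (hSeq ▸ hg_mem s' hs')
          (g t') (hSeq ▸ hg_mem t' ht') p₀ hp₀ q hq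
      rw [← e1]
      exact e2
  · intro s' hs'
    obtain ⟨s, hsX, rfl⟩ := hφiso.bijOn.surjOn hs'
    have himg : {t | t ∈ Y'1.S ∧ t ⊆ φ s} = ψ1 '' {u | u ∈ Y1.S ∧ u ⊆ s} := by
      ext t'
      constructor
      · rintro ⟨ht', hsub⟩
        refine ⟨g t', ⟨hg_mem t' ht', ?_⟩, hg_eq t' ht'⟩
        obtain ⟨q, hq⟩ := Y'1.nonemp t' ht'
        have hq2 : q ∈ algImage Y1 ψ1 s := by rw [halg1 s hsX]; exact hsub hq
        obtain ⟨w', hw'img, hqw⟩ := Set.mem_sUnion.mp hq2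
        obtain ⟨u, ⟨hu, hus⟩, rfl⟩ := hw'img
        have hteq : t' = ψ1 u := by
          by_contra hne
          have hd := Y'1.disj t' ht' (ψ1 u) (hiso1.bijOn.mapsTo hu) hne
          exact absurd (Set.mem_inter hq hqw) (by rw [hd]; exact Set.notMem_empty q)
        rw [hteq, hg_left u hu]
        exact hus
      · rintro ⟨u, ⟨hu, hus⟩, rfl⟩
        refine ⟨hiso1.bijOn.mapsTo hu, ?_⟩
        rw [← halg1 s hsX]
        exact fun x hx => Set.mem_sUnion.mpr ⟨ψ1 u, Set.mem_image_of_mem _ ⟨hu, hus⟩, hx⟩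
    show ⋃₀ ((fun t => ψ2 (g t)) '' {t | t ∈ Y'1.S ∧ t ⊆ φ s}) = id (φ s)
    rw [himg, ← Set.image_comp]
    have himg2 : ((fun t => ψ2 (g t)) ∘ ψ1) '' {u | u ∈ Y1.S ∧ u ⊆ s}
        = ψ2 '' {u | u ∈ Y2.S ∧ u ⊆ s} := by
      rw [← hSeq]
      apply Set.image_congr
      intro u hu
      show ψ2 (g (ψ1 u)) = ψ2 u
      rw [hg_left u hu.1]
    rw [himg2]
    exact halg2 s hsX
  · show ψ2 (g {(α', α')}) = {(α'', α'')}
    rw [← hψα1, hg_left _ hpe1.2.1]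
    exact hψα2

end SesquiHelpers

open CohCfg in
/-- Lemma: if `X` is sesquiclosed and `φ : X → X'` is a sesquiclosed algebraic
isomorphism, then `X'` is sesquiclosed. -/
theorem stmt_7 {Ω Ω' : Type u} (X : CohCfg Ω) (X' : CohCfg Ω')
    (hX : SesquiclosedCfg X)
    (φ : Set (Ω × Ω) → Set (Ω' × Ω')) (hφ : SesquiclosedIso X X' φ) :
    SesquiclosedCfg X' := by
  obtain ⟨hX1, hX2⟩ := hX
  obtain ⟨hφiso, hφext⟩ := hφ
  constructor
  · intro α' Y' hpe' Δ'
    obtain ⟨t', ht', hαt'⟩ := X'.cover (α', α')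
    obtain ⟨Δ, hΔfib, hΔne, hφΔ, hfi⟩ := fiber_pull hφiso ht' ⟨(α', α'), hαt', rfl⟩
    obtain ⟨α, hα⟩ := hΔne
    have hα'fi : α' ∈ fiberImage X φ Δ := by rw [hfi]; exact hαt'
    obtain ⟨Y, Y'0, ψ, hpeY, hpeY'0, hiso, halg, hψα⟩ := hφext Δ hΔfib α hα α' hα'fi
    have hSeq : Y'.S = Y'0.S := pext_S_eq hpe' hpeY'0
    have hαY : ({(α, α)} : Set (Ω × Ω)) ∈ Y.S := hpeY.2.1
    constructor
    · intro hfibΔ'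
      have hmem : diagRel Δ' ∈ Y'0.S := by rw [← hSeq]; exact hfibΔ'
      obtain ⟨e0, he0, he0eq⟩ := hiso.bijOn.surjOn hmem
      have he0d : ∀ p ∈ e0, p.1 = p.2 :=
        diag_preimage hiso he0 (by rw [he0eq]; exact fun p hp => hp.1)
      have hfibY : IsFiber Y {a : Ω | (a, a) ∈ e0} := by
        show diagRel {a : Ω | (a, a) ∈ e0} ∈ Y.S
        rw [diagRel_carrier he0d]; exact he0
      obtain ⟨s, hsX, hΔ0eq, hΔ0ne⟩ := (hX1 α Y hpeY _).mp hfibY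
      have h1 : diagRel (pointSet s α) = e0 := by
        rw [← hΔ0eq]; exact diagRel_carrier he0d
      have hfibs : diagRel (pointSet s α) ∈ Y.S := by rw [h1]; exact he0
      have hkey := key_pointSet hpeY.1 hiso hαY hψα hsX hfibs
      have hψeq : ψ (diagRel (pointSet s α)) = diagRel Δ' := by rw [h1, he0eq]
      simp only [hψeq, halg s hsX] at hkey
      rw [carrier_diagRel] at hkey
      refine ⟨φ s, hφiso.bijOn.mapsTo hsX, hkey, ?_⟩
      obtain ⟨p, hp⟩ := Y'0.nonemp _ hmem
      exact ⟨p.1, hp.2⟩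
    · rintro ⟨s', hs', hΔ'eq, hΔ'ne⟩
      obtain ⟨s, hsX, rfl⟩ := hφiso.bijOn.surjOn hs'
      obtain ⟨b, hb⟩ := hΔ'ne
      have hbφ : (α', b) ∈ φ s := by rw [hΔ'eq] at hb; exact hb
      rw [← halg s hsX] at hbφ
      obtain ⟨t'', ht''img, hmem⟩ := Set.mem_sUnion.mp hbφ
      obtain ⟨u, ⟨hu, hus⟩, rfl⟩ := ht''img
      have hstart : ∀ p ∈ u, p.1 = α :=
        start_bwd hiso hαY hψα hu ⟨(α', b), hmem, rfl⟩
      obtain ⟨p₀, hp₀⟩ := Y.nonemp u hu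
      have hp2 : p₀.2 ∈ pointSet s α := by
        have h1 : (α, p₀.2) = p₀ := Prod.ext_iff.mpr ⟨(hstart p₀ hp₀).symm, rfl⟩
        show (α, p₀.2) ∈ s
        rw [h1]; exact hus hp₀
      have hfibY : IsFiber Y (pointSet s α) :=
        (hX1 α Y hpeY (pointSet s α)).mpr ⟨s, hsX, rfl, ⟨p₀.2, hp2⟩⟩
      have hkey := key_pointSet hpeY.1 hiso hαY hψα hsX hfibY
      have hmem' : ψ (diagRel (pointSet s α)) ∈ Y'0.S := hiso.bijOn.mapsTo hfibY
      have hd' : ∀ p ∈ ψ (diagRel (pointSet s α)), p.1 = p.2 :=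
        diag_image hiso hfibY (fun p hp => hp.1)
      have h2 : diagRel {a : Ω' | (a, a) ∈ ψ (diagRel (pointSet s α))}
          = ψ (diagRel (pointSet s α)) := diagRel_carrier hd'
      rw [hkey, halg s hsX, ← hΔ'eq] at h2
      show diagRel Δ' ∈ Y'.S
      rw [hSeq, h2]
      exact hmem'
  · constructor
    · exact ⟨Set.bijOn_id X'.S,
        fun r hr s hs t ht p hp q hq => X'.inum r hr s hs t ht p hp q hq⟩
    · intro Δ' hΔ'fib α' hα' α'' hα''
      have hα''Δ : α'' ∈ Δ' := by
        have h3 : (α'', α'') ∈ diagRel Δ' := hα''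
        exact h3.2
      have hdp : ∃ p ∈ diagRel Δ', p.1 = p.2 := ⟨(α', α'), ⟨rfl, hα'⟩, rfl⟩
      obtain ⟨Δ, hΔfib, hΔne, hφΔ, hfi⟩ := fiber_pull hφiso hΔ'fib hdp
      obtain ⟨α, hαΔ⟩ := hΔne
      have hfi' : fiberImage X φ Δ = Δ' := by rw [hfi]; exact carrier_diagRel Δ'
      obtain ⟨Y1, Y'1, ψ1, hpe1, hpe'1, hiso1, halg1, hψ1⟩ :=
        hφext Δ hΔfib α hαΔ α' (by rw [hfi']; exact hα')
      obtain ⟨Y2, Y'2, ψ2, hpe2, hpe'2, hiso2, halg2, hψ2⟩ :=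
        hφext Δ hΔfib α hαΔ α'' (by rw [hfi']; exact hα''Δ)
      exact compose_ext hφiso hpe1 hpe2 hpe'1 hpe'2 hiso1 hiso2 halg1 halg2 hψ1 hψ2
end

section
/- Let X be a commutative sesquiclosed scheme, 𝔖₀ and 𝔖 sections of X with 𝔖₀ ≤ 𝔖, and α a point with α_{𝔖₀} ≠ ∅. Assume that the coherent configuration ((X_𝔖)_{α_𝔖})_{𝔖₀} is partly regular. Then ((X_𝔖)_{α_𝔖})_{𝔖₀} = ((X_α)_𝔖)_{𝔖₀}. -/
open Set

universe u

namespace CohCfg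

section Aux

variable {T : Type u}

noncomputable def clsOf (W : CohCfg T) (p : T × T) : Set (T × T) :=
  (W.cover p).choose

lemma clsOf_mem (W : CohCfg T) (p : T × T) : clsOf W p ∈ W.S :=
  (W.cover p).choose_spec.1

lemma mem_clsOf (W : CohCfg T) (p : T × T) : p ∈ clsOf W p :=
  (W.cover p).choose_spec.2

lemma cls_unique (W : CohCfg T) {c : Set (T × T)} {p : T × T}
    (hc : c ∈ W.S) (hp : p ∈ c) : c = clsOf W p := by
  by_contra h
  have hd := W.disj c hc _ (clsOf_mem W p) h
  have : p ∈ c ∩ clsOf W p := ⟨hp, mem_clsOf W p⟩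
  rw [hd] at this
  exact this

lemma mem_eq (W : CohCfg T) {c c' : Set (T × T)} {p : T × T}
    (hc : c ∈ W.S) (hc' : c' ∈ W.S) (hp : p ∈ c) (hp' : p ∈ c') : c = c' := by
  rw [cls_unique W hc hp, cls_unique W hc' hp']

def convRel (c : Set (T × T)) : Set (T × T) := {p : T × T | (p.2, p.1) ∈ c}

lemma convRel_mem (W : CohCfg T) {c : Set (T × T)} (hc : c ∈ W.S) : convRel c ∈ W.S :=
  W.conv c hc

lemma triangle (W : CohCfg T) {r s t : Set (T × T)} (hr : r ∈ W.S) (hs : s ∈ W.S)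
    (ht : t ∈ W.S) {p q : T × T} (hp : p ∈ t) (hq : q ∈ t)
    (h : ∃ γ, (p.1, γ) ∈ r ∧ (γ, p.2) ∈ s) : ∃ γ, (q.1, γ) ∈ r ∧ (γ, q.2) ∈ s := by
  have : Finite T := W.finite
  have h1 := W.inum r hr s hs t ht p hp q hq
  have h2 : 0 < {γ : T | (p.1, γ) ∈ r ∧ (γ, p.2) ∈ s}.ncard :=
    (Set.ncard_pos (Set.toFinite _)).mpr h
  rw [h1] at h2
  exact (Set.ncard_pos (Set.toFinite _)).mp h2

lemma diag_of_cls (W : CohCfg T) (x : T) : ∀ p ∈ clsOf W (x, x), p.1 = p.2 :=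
  W.diag _ (clsOf_mem W _) ⟨(x, x), mem_clsOf W _, rfl⟩

lemma source_diag (W : CohCfg T) {c : Set (T × T)} (hc : c ∈ W.S) {x y x' y' : T}
    (hp : (x, y) ∈ c) (hq : (x', y') ∈ c) : (x', x') ∈ clsOf W (x, x) := by
  obtain ⟨γ, h1, h2⟩ := triangle W (clsOf_mem W (x, x)) hc hc hp hq ⟨x, mem_clsOf W _, hp⟩
  have hγ : x' = γ := diag_of_cls W x _ h1
  rw [← hγ] at h1
  exact h1

lemma valence_eq (W : CohCfg T) {x x' : T} (h : (x', x') ∈ clsOf W (x, x))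
    {c : Set (T × T)} (hc : c ∈ W.S) :
    (pointSet c x').ncard = (pointSet c x).ncard := by
  have : Finite T := W.finite
  have h1 := W.inum c hc (convRel c) (W.conv c hc) (clsOf W (x, x)) (clsOf_mem W _)
      (x', x') h (x, x) (mem_clsOf W _)
  have e1 : ∀ z : T, {γ : T | ((z, z).1, γ) ∈ c ∧ (γ, (z, z).2) ∈ convRel c} = pointSet c z := by
    intro z
    ext γ
    simp only [Set.mem_setOf_eq, pointSet, convRel, and_self]
  rw [e1 x', e1 x] at h1
  exact h1

lemma ncard_le_one_elim [Finite T] {s : Set T} (h : s.ncard ≤ 1) {a b : T}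
    (ha : a ∈ s) (hb : b ∈ s) : a = b := by
  rcases (Set.ncard_le_one_iff_eq (Set.toFinite s)).mp h with h' | ⟨x, rfl⟩
  · simp [h'] at ha
  · simp only [Set.mem_singleton_iff] at ha hb
    rw [ha, hb]

lemma regular_row (W : CohCfg T) {β : T} (hreg : ∀ c ∈ W.S, (pointSet c β).ncard ≤ 1)
    {δ : T} (hδ : (δ, δ) ∈ clsOf W (β, β)) (x : T) :
    ∃ z, pointSet (clsOf W (β, x)) δ = {z} := by
  have : Finite T := W.finite
  apply Set.ncard_eq_one.mp
  have h1 := valence_eq W hδ (clsOf_mem W (β, x))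
  have hx : x ∈ pointSet (clsOf W (β, x)) β := mem_clsOf W (β, x)
  have h2 : (pointSet (clsOf W (β, x)) β).ncard = 1 :=
    le_antisymm (hreg _ (clsOf_mem W _)) ((Set.ncard_pos (Set.toFinite _)).mpr ⟨x, hx⟩)
  rw [h1, h2]

lemma regular_auto (W : CohCfg T) {β : T} (hreg : ∀ c ∈ W.S, (pointSet c β).ncard ≤ 1)
    {δ : T} (hδ : (δ, δ) ∈ clsOf W (β, β)) :
    ∃ f : T → T, Function.Bijective f ∧ (∀ t ∈ W.S, relImage f t = t) ∧
      ∀ x z, (δ, z) ∈ clsOf W (β, x) → f x = z := by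
  have : Finite T := W.finite
  choose g hg using regular_row W hreg hδ
  have hmem : ∀ x, (δ, g x) ∈ clsOf W (β, x) := by
    intro x
    have : g x ∈ pointSet (clsOf W (β, x)) δ := by rw [hg x]; rfl
    exact this
  have huniq : ∀ x z, (δ, z) ∈ clsOf W (β, x) → g x = z := by
    intro x z hz
    have : z ∈ pointSet (clsOf W (β, x)) δ := hz
    rw [hg x] at this
    exact (Set.mem_singleton_iff.mp this).symm
  have hpres : ∀ x y : T, (g x, g y) ∈ clsOf W (x, y) := by
    intro x y
    obtain ⟨γ, h1, h2⟩ := triangle W (clsOf_mem W (β, x)) (clsOf_mem W (x, y))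
      (clsOf_mem W (β, y)) (mem_clsOf W (β, y)) (hmem y)
      ⟨x, mem_clsOf W (β, x), mem_clsOf W (x, y)⟩
    rw [← huniq x γ h1] at h2
    exact h2
  have hinj : Function.Injective g := by
    intro x x' hxx
    have h1 : (δ, g x) ∈ clsOf W (β, x) := hmem x
    have h2 : (δ, g x) ∈ clsOf W (β, x') := by rw [hxx]; exact hmem x'
    have hcls : clsOf W (β, x) = clsOf W (β, x') :=
      mem_eq W (clsOf_mem W _) (clsOf_mem W _) h1 h2
    have hx : x ∈ pointSet (clsOf W (β, x)) β := mem_clsOf W (β, x)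
    have hx' : x' ∈ pointSet (clsOf W (β, x)) β := by
      rw [hcls]; exact mem_clsOf W (β, x')
    exact ncard_le_one_elim (hreg _ (clsOf_mem W (β, x))) hx hx'
  have hbij : Function.Bijective g := Finite.injective_iff_bijective.mp hinj
  refine ⟨g, hbij, ?_, huniq⟩
  intro t ht
  have hsub : relImage g t ⊆ t := by
    rintro ⟨u, v⟩ ⟨⟨a, b⟩, hab, hEq⟩
    have h1 : (g a, g b) ∈ clsOf W (a, b) := hpres a b
    rw [← cls_unique W ht hab] at h1
    have : ((fun p : T × T => (g p.1, g p.2)) (a, b)) = (u, v) := hEq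
    simp only at this
    rw [← this]
    exact h1
  have hinj2 : Function.Injective (fun p : T × T => (g p.1, g p.2)) := by
    intro p q hpq
    simp only [Prod.mk.injEq] at hpq
    exact Prod.ext (hinj hpq.1) (hinj hpq.2)
  have hcard : t.ncard ≤ (relImage g t).ncard := by
    rw [relImage, Set.ncard_image_of_injective t hinj2]
  exact Set.eq_of_subset_of_ncard_le hsub hcard (Set.toFinite t)

lemma regular_ext (W : CohCfg T) {β : T} (hreg : ∀ c ∈ W.S, (pointSet c β).ncard ≤ 1)
    {f g : T → T} (hf : ∀ t ∈ W.S, relImage f t = t) (hg : ∀ t ∈ W.S, relImage g t = t)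
    (hfg : f β = g β) : f = g := by
  have : Finite T := W.finite
  funext x
  have hf1 : (f β, f x) ∈ clsOf W (β, x) := by
    have : (f β, f x) ∈ relImage f (clsOf W (β, x)) := ⟨(β, x), mem_clsOf W _, rfl⟩
    rwa [hf _ (clsOf_mem W _)] at this
  have hg1 : (g β, g x) ∈ clsOf W (β, x) := by
    have : (g β, g x) ∈ relImage g (clsOf W (β, x)) := ⟨(β, x), mem_clsOf W _, rfl⟩
    rwa [hg _ (clsOf_mem W _)] at this
  rw [hfg] at hf1
  have hd : (g β, g β) ∈ clsOf W (β, β) := by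
    have : (g β, g β) ∈ relImage g (clsOf W (β, β)) := ⟨(β, β), mem_clsOf W _, rfl⟩
    rwa [hg _ (clsOf_mem W _)] at this
  have hv := valence_eq W hd (clsOf_mem W (β, x))
  have hle : (pointSet (clsOf W (β, x)) (g β)).ncard ≤ 1 := by
    rw [hv]; exact hreg _ (clsOf_mem W _)
  exact ncard_le_one_elim hle hf1 hg1

lemma regular_trans (W : CohCfg T) {β : T} (hreg : ∀ c ∈ W.S, (pointSet c β).ncard ≤ 1)
    {c : Set (T × T)} (hc : c ∈ W.S) {p q : T × T} (hp : p ∈ c) (hq : q ∈ c) :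
    ∃ f : T → T, Function.Bijective f ∧ (∀ t ∈ W.S, relImage f t = t) ∧
      f p.1 = q.1 ∧ f p.2 = q.2 := by
  obtain ⟨δ, h1, h2⟩ := triangle W (convRel_mem W (clsOf_mem W (β, p.1)))
    (clsOf_mem W (β, p.2)) hc hp hq
    ⟨β, (mem_clsOf W (β, p.1) : (β, p.1) ∈ _), mem_clsOf W (β, p.2)⟩
  have h1' : (δ, q.1) ∈ clsOf W (β, p.1) := h1
  have hδ : (δ, δ) ∈ clsOf W (β, β) :=
    source_diag W (clsOf_mem W (β, p.1)) (mem_clsOf W (β, p.1)) h1'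
  obtain ⟨f, hbij, hrel, huniq⟩ := regular_auto W hreg hδ
  exact ⟨f, hbij, hrel, huniq p.1 q.1 h1', huniq p.2 q.2 h2⟩

lemma secRel_mono {Δ : Set T} {e : Set (T × T)} {s s' : Set (T × T)} (h : s ⊆ s') :
    secRel Δ e s ⊆ secRel Δ e s' := by
  rintro p ⟨a, ha, b, hb, hab⟩
  exact ⟨a, ha, b, hb, h hab⟩

lemma ext' {W1 W2 : CohCfg T} (h : W1.S = W2.S) : W1 = W2 := by
  cases W1; cases W2; cases h; rfl

end Aux

end CohCfg


open CohCfg in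
/-- Lemma: for a commutative sesquiclosed scheme `X`, sections `𝔖₀ = Δ₀/e₀ ≤ 𝔖 = Δ/e`
and `α ∈ Δ₀`, if `((X_𝔖)_{α_𝔖})_{𝔖₀}` is partly regular then it equals
`((X_α)_𝔖)_{𝔖₀}`.  Here the section of `X_𝔖` canonically induced by `𝔖₀` has point
set `{Γ ∈ Δ/e | Γ ∩ Δ₀ ≠ ∅}` and equivalence `(e₀)_𝔖`. -/
theorem stmt_8 {Ω : Type u} (X : CohCfg Ω) (hsch : IsScheme X)
    (hcomm : IsCommutative X) (hsq : SesquiclosedCfg X)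
    (Δ : Set Ω) (e : Set (Ω × Ω)) (hS : IsSection X Δ e)
    (Δ₀ : Set Ω) (e₀ : Set (Ω × Ω)) (hS0 : IsSection X Δ₀ e₀)
    (hΔ : Δ₀ ⊆ Δ) (he : e ⊆ e₀)
    (α : Ω) (hα : α ∈ Δ₀)
    -- X_𝔖 and its one-point extension at α_𝔖
    (YS : CohCfg (Sec Δ e)) (hYS : IsSectionCfg X Δ e YS)
    (Z0 : CohCfg (Sec Δ e))
    (hZ0 : IsPointExt YS (⟨eClass e α, α, hΔ hα, rfl⟩ : Sec Δ e) Z0)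
    -- X_α and its section configuration on 𝔖
    (Xα : CohCfg Ω) (hXα : IsPointExt X α Xα)
    (Y' : CohCfg (Sec Δ e)) (hY' : IsSectionCfg Xα Δ e Y')
    -- the two restriction-quotients to the induced section 𝔖₀ of 𝔖
    (W1 W2 : CohCfg (Sec {Γ : Sec Δ e | (Γ.1 ∩ Δ₀).Nonempty} (secRel Δ e e₀)))
    (hW1 : IsSectionCfg Z0 {Γ : Sec Δ e | (Γ.1 ∩ Δ₀).Nonempty} (secRel Δ e e₀) W1)
    (hW2 : IsSectionCfg Y' {Γ : Sec Δ e | (Γ.1 ∩ Δ₀).Nonempty} (secRel Δ e e₀) W2)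
    (hpr : PartlyRegular W1) :
    W1 = W2 := by
  have hfinΩ : Finite Ω := X.finite
  have hfinΛ : Finite (Sec Δ e) := YS.finite
  have hfinT : Finite (Sec {Γ : Sec Δ e | (Γ.1 ∩ Δ₀).Nonempty} (secRel Δ e e₀)) := W1.finite
  set Aα : Sec Δ e := (⟨eClass e α, α, hΔ hα, rfl⟩ : Sec Δ e) with hAαdef
  -- parabolic data
  obtain ⟨heP, d, hdP, hed, aΔ, hΔdef⟩ := hS
  obtain ⟨he0P, d0, hd0P, he0d0, a0, hΔ0def⟩ := hS0
  have esym : ∀ {x y : Ω}, (x, y) ∈ e → (y, x) ∈ e := fun h => heP.2.2.1 _ h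
  have etrans : ∀ {x y z : Ω}, (x, y) ∈ e → (y, z) ∈ e → (x, z) ∈ e :=
    fun h1 h2 => heP.2.2.2 _ _ _ h1 h2
  have e0sym : ∀ {x y : Ω}, (x, y) ∈ e₀ → (y, x) ∈ e₀ := fun h => he0P.2.2.1 _ h
  have e0trans : ∀ {x y z : Ω}, (x, y) ∈ e₀ → (y, z) ∈ e₀ → (x, z) ∈ e₀ :=
    fun h1 h2 => he0P.2.2.2 _ _ _ h1 h2
  have hΔ0mem : ∀ {x y : Ω}, x ∈ Δ₀ → (x, y) ∈ d0 → y ∈ Δ₀ := by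
    intro x y hx hxy
    rw [hΔ0def] at hx ⊢
    exact hd0P.2.2.2 _ _ _ hx hxy
  -- members of a section class are e-related
  have sec_rep : ∀ (Γ : Sec Δ e) {x y : Ω}, x ∈ Γ.1 → y ∈ Γ.1 → (x, y) ∈ e := by
    intro Γ x y hx hy
    obtain ⟨a, haΔ, hΓ⟩ := Γ.2
    rw [hΓ] at hx hy
    exact etrans (esym hx) hy
  have sec_mem_of : ∀ (Γ : Sec Δ e) {x y : Ω}, x ∈ Γ.1 → (x, y) ∈ e → y ∈ Γ.1 := by
    intro Γ x y hx hxy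
    obtain ⟨a, haΔ, hΓ⟩ := Γ.2
    rw [hΓ] at hx ⊢
    exact etrans hx hxy
  -- e' facts
  have e'trans : ∀ {Γ₁ Γ₂ Γ₃ : Sec Δ e}, (Γ₁, Γ₂) ∈ secRel Δ e e₀ →
      (Γ₂, Γ₃) ∈ secRel Δ e e₀ → (Γ₁, Γ₃) ∈ secRel Δ e e₀ := by
    rintro Γ₁ Γ₂ Γ₃ ⟨p, hp, q, hq, hpq⟩ ⟨q', hq', r, hr, hq'r⟩
    exact ⟨p, hp, r, hr, e0trans hpq (e0trans (he (sec_rep Γ₂ hq hq')) hq'r)⟩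
  -- hygiene : members of classes of outer points are inside Δ₀
  have hyg : ∀ (P : Sec {Γ : Sec Δ e | (Γ.1 ∩ Δ₀).Nonempty} (secRel Δ e e₀))
      {Γ : Sec Δ e}, Γ ∈ P.1 → Γ.1 ⊆ Δ₀ := by
    intro P Γ hΓ
    obtain ⟨Γs, hΓsΔ', hP⟩ := P.2
    rw [hP] at hΓ
    obtain ⟨p, hp, q, hq, hpq⟩ := hΓ
    obtain ⟨x₀, hx₀Γs, hx₀Δ₀⟩ := hΓsΔ'
    have h1 : q ∈ Δ₀ :=
      hΔ0mem (hΔ0mem hx₀Δ₀ (he0d0 (he (sec_rep Γs hx₀Γs hp)))) (he0d0 hpq)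
    intro y hy
    exact hΔ0mem h1 (he0d0 (he (sec_rep Γ hq hy)))
  -- singleton relation at Aα in Y'
  have sec_eq_of_mem : ∀ (Γ : Sec Δ e) {x : Ω}, x ∈ Γ.1 → Γ.1 = eClass e x := by
    intro Γ x hx
    ext z
    constructor
    · intro hz
      exact sec_rep Γ hx hz
    · intro hz
      exact sec_mem_of Γ hx hz
  have hsingleton : secRel Δ e ({(α, α)} : Set (Ω × Ω)) = {((Aα, Aα) : Sec Δ e × Sec Δ e)} := by
    ext ⟨Γ, Γ'⟩
    constructor
    · rintro ⟨a, ha, b, hb, hab⟩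
      have h1 : a = α ∧ b = α := by
        have := Set.mem_singleton_iff.mp hab
        exact ⟨congrArg Prod.fst this, congrArg Prod.snd this⟩
      rw [h1.1] at ha
      rw [h1.2] at hb
      have hΓeq : Γ = Aα := Subtype.ext ((sec_eq_of_mem Γ ha).trans rfl)
      have hΓ'eq : Γ' = Aα := Subtype.ext ((sec_eq_of_mem Γ' hb).trans rfl)
      rw [hΓeq, hΓ'eq]
      rfl
    · intro h
      have h1 : Γ = Aα ∧ Γ' = Aα := by
        have := Set.mem_singleton_iff.mp h
        exact ⟨congrArg Prod.fst this, congrArg Prod.snd this⟩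
      rw [h1.1, h1.2]
      exact ⟨α, heP.2.1 α, α, heP.2.1 α, rfl⟩
  have h1αY' : ({((Aα, Aα) : Sec Δ e × Sec Δ e)} : Set (Sec Δ e × Sec Δ e)) ∈ Y'.S := by
    rw [hY']
    exact ⟨{(α, α)}, hXα.2.1, hsingleton.symm, ⟨(Aα, Aα), rfl⟩⟩
  -- le YS Y'
  have hleYSY' : le YS Y' := by
    intro σ hσ t ht hint
    rw [hYS] at hσ
    obtain ⟨sX, hsX, rfl, hσne⟩ := hσ
    rw [hY'] at ht
    obtain ⟨u, hu, rfl, htne⟩ := ht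
    obtain ⟨p, hpt, hpσ⟩ := hint
    obtain ⟨a, ha, b, hb, hab⟩ := hpt
    have hs₂ : u ⊆ clsOf X (a, b) :=
      hXα.1 _ (clsOf_mem X _) u hu ⟨(a, b), hab, mem_clsOf X _⟩
    have hsec2 : secRel Δ e u ⊆ secRel Δ e (clsOf X (a, b)) := secRel_mono hs₂
    have hσ₂YS : secRel Δ e (clsOf X (a, b)) ∈ YS.S := by
      rw [hYS]
      exact ⟨_, clsOf_mem X _, rfl, ⟨p, hsec2 ⟨a, ha, b, hb, hab⟩⟩⟩
    have hσYS : secRel Δ e sX ∈ YS.S := by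
      rw [hYS]
      exact ⟨_, hsX, rfl, ⟨p, hpσ⟩⟩
    have heq : secRel Δ e sX = secRel Δ e (clsOf X (a, b)) :=
      mem_eq YS hσYS hσ₂YS hpσ (hsec2 ⟨a, ha, b, hb, hab⟩)
    rw [heq]
    exact hsec2
  have hleZ0Y' : le Z0 Y' := hZ0.2.2 Y' hleYSY' h1αY'
  -- le W1 W2
  have hleW : le W1 W2 := by
    intro w hw c hcW2 hint
    rw [hW1] at hw
    obtain ⟨t, htZ0, rfl, hwne⟩ := hw
    obtain ⟨P, hPc, hPw⟩ := hint
    obtain ⟨A, hA, B, hB, hABt⟩ := hPw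
    have hv₂ : clsOf Y' (A, B) ⊆ t :=
      hleZ0Y' t htZ0 _ (clsOf_mem Y' _) ⟨(A, B), mem_clsOf Y' _, hABt⟩
    have hPin : P ∈ secRel {Γ : Sec Δ e | (Γ.1 ∩ Δ₀).Nonempty} (secRel Δ e e₀) (clsOf Y' (A, B)) :=
      ⟨A, hA, B, hB, mem_clsOf Y' _⟩
    have hcc : secRel {Γ : Sec Δ e | (Γ.1 ∩ Δ₀).Nonempty} (secRel Δ e e₀) (clsOf Y' (A, B)) ∈ W2.S := by
      rw [hW2]
      exact ⟨_, clsOf_mem Y' _, rfl, ⟨P, hPin⟩⟩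
    have heqc : c = secRel {Γ : Sec Δ e | (Γ.1 ∩ Δ₀).Nonempty} (secRel Δ e e₀) (clsOf Y' (A, B)) :=
      mem_eq W2 hcW2 hcc hPc hPin
    rw [heqc]
    exact secRel_mono hv₂
  -- regular point
  obtain ⟨β', hreg1⟩ := hpr
  have hreg2 : ∀ c ∈ W2.S, (pointSet c β').ncard ≤ 1 := by
    intro c hc
    obtain ⟨p, hp⟩ := W2.nonemp c hc
    have hsub : c ⊆ clsOf W1 p := hleW _ (clsOf_mem W1 p) c hc ⟨p, hp, mem_clsOf W1 p⟩
    calc (pointSet c β').ncard ≤ (pointSet (clsOf W1 p) β').ncard :=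
          Set.ncard_le_ncard (fun z hz => hsub hz) (Set.toFinite _)
      _ ≤ 1 := hreg1 _ (clsOf_mem W1 p)
  -- KEY STEP: the W1-fiber of β' is contained in its W2-fiber
  have hfib : ∀ P : Sec {Γ : Sec Δ e | (Γ.1 ∩ Δ₀).Nonempty} (secRel Δ e e₀),
      (P, P) ∈ clsOf W1 (β', β') → (P, P) ∈ clsOf W2 (β', β') := by
    intro P hx
    have hd₁ := clsOf_mem W1 ((β', β'))
    rw [hW1] at hd₁
    obtain ⟨t₀, ht₀, hrep, -⟩ := hd₁
    have hββ : (β', β') ∈ clsOf W1 (β', β') := mem_clsOf W1 _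
    rw [hrep] at hββ hx
    obtain ⟨Γ, hΓ, Γ', hΓ', hΓΓ'⟩ := hββ
    obtain ⟨A, hA, B, hB, hAB⟩ := hx
    -- sources Γ and A lie in the same Z0-fiber
    have hSD : (A, A) ∈ clsOf Z0 (Γ, Γ) := source_diag Z0 ht₀ hΓΓ' hAB
    -- ρ ⊆ σ
    have hρσ : clsOf Z0 (Aα, Γ) ⊆ clsOf YS (Aα, Γ) :=
      hZ0.1 _ (clsOf_mem YS _) _ (clsOf_mem Z0 _) ⟨(Aα, Γ), mem_clsOf Z0 _, mem_clsOf YS _⟩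
    -- transport the α-naming from Γ to A inside Z0
    obtain ⟨z, hz1, hz2⟩ := triangle Z0 (convRel_mem Z0 (clsOf_mem Z0 (Aα, Γ)))
      (clsOf_mem Z0 (Aα, Γ)) (clsOf_mem Z0 (Γ, Γ)) (mem_clsOf Z0 (Γ, Γ)) hSD
      ⟨Aα, (mem_clsOf Z0 (Aα, Γ) : (Aα, Γ) ∈ _), mem_clsOf Z0 (Aα, Γ)⟩
    have hz2' : (z, A) ∈ clsOf Z0 (Aα, Γ) := hz2
    have hzz : (z, z) ∈ clsOf Z0 (Aα, Aα) :=
      source_diag Z0 (clsOf_mem Z0 (Aα, Γ)) (mem_clsOf Z0 (Aα, Γ)) hz2'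
    have h1cls : clsOf Z0 (Aα, Aα) = {((Aα, Aα) : Sec Δ e × Sec Δ e)} :=
      (cls_unique Z0 hZ0.2.1 rfl).symm
    rw [h1cls] at hzz
    have hzAα : z = Aα := congrArg Prod.fst (Set.mem_singleton_iff.mp hzz)
    rw [hzAα] at hz2'
    have hAσ : (Aα, A) ∈ clsOf YS (Aα, Γ) := hρσ hz2'
    have hΓσ : (Aα, Γ) ∈ clsOf YS (Aα, Γ) := mem_clsOf YS _
    have hσ := clsOf_mem YS ((Aα, Γ))
    rw [hYS] at hσ
    obtain ⟨s₀', hs₀', hσrep, -⟩ := hσ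
    rw [hσrep] at hAσ hΓσ
    obtain ⟨a, ha, b', hb', hab'⟩ := hΓσ
    obtain ⟨a'', ha'', y, hy, ha''y⟩ := hAσ
    -- flip e₀∘s₀'-paths to s₀'∘e₀-paths using commutativity
    have hflip : ∀ {aa yy : Ω}, aa ∈ (Aα : Sec Δ e).1 → (aa, yy) ∈ s₀' →
        ∃ γ, (α, γ) ∈ s₀' ∧ (γ, yy) ∈ e₀ := by
      intro aa yy haa hayy
      have hαaa : (α, aa) ∈ e := haa
      have hf₁e₀ : clsOf X (α, aa) ⊆ e₀ :=
        he0P.1 _ (clsOf_mem X _) ⟨(α, aa), mem_clsOf X _, he hαaa⟩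
      have hpos : (0 : ℕ) < cnum (clsOf X (α, aa)) s₀' (α, yy) := by
        unfold cnum
        refine (Set.ncard_pos (Set.toFinite _)).mpr ⟨aa, ?_, hayy⟩
        exact mem_clsOf X _
      rw [hcomm (clsOf X (α, aa)) (clsOf_mem X _) s₀' hs₀' (α, yy)] at hpos
      have hne : {γ : Ω | ((α, yy).1, γ) ∈ s₀' ∧ (γ, (α, yy).2) ∈ clsOf X (α, aa)}.Nonempty := by
        have h2 := (Set.ncard_pos (Set.toFinite _)).mp hpos
        exact h2
      obtain ⟨γ, hγ1, hγ2⟩ := hne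
      exact ⟨γ, hγ1, hf₁e₀ hγ2⟩
    obtain ⟨γ₂, hγ₂s, hγ₂e₀⟩ := hflip ha hab'
    obtain ⟨γ₁, hγ₁s, hγ₁e₀⟩ := hflip ha'' ha''y
    have hb'Δ₀ : b' ∈ Δ₀ := hyg β' hΓ hb'
    have hyΔ₀ : y ∈ Δ₀ := hyg P hA hy
    have hγ₂Δ₀ : γ₂ ∈ Δ₀ := hΔ0mem hb'Δ₀ (he0d0 (e0sym hγ₂e₀))
    have hγ₁Δ₀ : γ₁ ∈ Δ₀ := hΔ0mem hyΔ₀ (he0d0 (e0sym hγ₁e₀))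
    have hγ₂Δ : γ₂ ∈ Δ := hΔ hγ₂Δ₀
    have hγ₁Δ : γ₁ ∈ Δ := hΔ hγ₁Δ₀
    have hFibfiber : IsFiber Xα (pointSet s₀' α) :=
      (hsq.1 α Xα hXα (pointSet s₀' α)).mpr ⟨s₀', hs₀', rfl, ⟨γ₂, hγ₂s⟩⟩
    set Γ2 : Sec Δ e := ⟨eClass e γ₂, γ₂, hγ₂Δ, rfl⟩ with hΓ2def
    set Γ1 : Sec Δ e := ⟨eClass e γ₁, γ₁, hγ₁Δ, rfl⟩ with hΓ1def
    have hΓ2mem : (Γ2, Γ2) ∈ secRel Δ e (diagRel (pointSet s₀' α)) :=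
      ⟨γ₂, heP.2.1 γ₂, γ₂, heP.2.1 γ₂, rfl, hγ₂s⟩
    have hΓ1mem : (Γ1, Γ1) ∈ secRel Δ e (diagRel (pointSet s₀' α)) :=
      ⟨γ₁, heP.2.1 γ₁, γ₁, heP.2.1 γ₁, rfl, hγ₁s⟩
    have hvY' : secRel Δ e (diagRel (pointSet s₀' α)) ∈ Y'.S := by
      rw [hY']
      exact ⟨_, hFibfiber, rfl, ⟨(Γ2, Γ2), hΓ2mem⟩⟩
    have hΓ2β : Γ2 ∈ β'.1 := by
      obtain ⟨Γs, hΓsΔ', hβ'e⟩ := β'.2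
      rw [hβ'e] at hΓ ⊢
      exact e'trans hΓ ⟨b', hb', γ₂, heP.2.1 γ₂, e0sym hγ₂e₀⟩
    have hPΓ1 : Γ1 ∈ P.1 := by
      obtain ⟨Γs, hΓsΔ', hPe⟩ := P.2
      rw [hPe] at hA ⊢
      exact e'trans hA ⟨y, hy, γ₁, heP.2.1 γ₁, e0sym hγ₁e₀⟩
    have hββqq : ((β', β')) ∈ secRel {Γ : Sec Δ e | (Γ.1 ∩ Δ₀).Nonempty} (secRel Δ e e₀)
        (secRel Δ e (diagRel (pointSet s₀' α))) :=
      ⟨Γ2, hΓ2β, Γ2, hΓ2β, hΓ2mem⟩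
    have hxxqq : ((P, P)) ∈ secRel {Γ : Sec Δ e | (Γ.1 ∩ Δ₀).Nonempty} (secRel Δ e e₀)
        (secRel Δ e (diagRel (pointSet s₀' α))) :=
      ⟨Γ1, hPΓ1, Γ1, hPΓ1, hΓ1mem⟩
    have hqqW2 : secRel {Γ : Sec Δ e | (Γ.1 ∩ Δ₀).Nonempty} (secRel Δ e e₀)
        (secRel Δ e (diagRel (pointSet s₀' α))) ∈ W2.S := by
      rw [hW2]
      exact ⟨_, hvY', rfl, ⟨_, hββqq⟩⟩
    have hfin : secRel {Γ : Sec Δ e | (Γ.1 ∩ Δ₀).Nonempty} (secRel Δ e e₀)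
        (secRel Δ e (diagRel (pointSet s₀' α))) = clsOf W2 (β', β') :=
      cls_unique W2 hqqW2 hββqq
    rw [← hfin]
    exact hxxqq
  -- automorphisms of W2 preserve W1 classes
  have hW1fromW2 : ∀ f : Sec {Γ : Sec Δ e | (Γ.1 ∩ Δ₀).Nonempty} (secRel Δ e e₀) →
      Sec {Γ : Sec Δ e | (Γ.1 ∩ Δ₀).Nonempty} (secRel Δ e e₀),
      (∀ c ∈ W2.S, relImage f c = c) → ∀ w ∈ W1.S, relImage f w = w := by
    intro f hf w hw
    apply Set.Subset.antisymm
    · rintro p ⟨q, hq, rfl⟩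
      have hcw : clsOf W2 q ⊆ w := hleW w hw _ (clsOf_mem W2 q) ⟨q, mem_clsOf W2 q, hq⟩
      have hmem : (f q.1, f q.2) ∈ relImage f (clsOf W2 q) := ⟨q, mem_clsOf W2 q, rfl⟩
      rw [hf _ (clsOf_mem W2 q)] at hmem
      exact hcw hmem
    · intro p hp
      have hcw : clsOf W2 p ⊆ w := hleW w hw _ (clsOf_mem W2 p) ⟨p, mem_clsOf W2 p, hp⟩
      have hmem : p ∈ relImage f (clsOf W2 p) := by
        rw [hf _ (clsOf_mem W2 p)]
        exact mem_clsOf W2 p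
      obtain ⟨q, hq, hqp⟩ := hmem
      exact ⟨q, hcw hq, hqp⟩
  -- W1.S ⊆ W2.S
  have hSsub : W1.S ⊆ W2.S := by
    intro w hw
    obtain ⟨p, hp⟩ := W1.nonemp w hw
    have hws : w = clsOf W2 p := by
      apply Set.Subset.antisymm
      · intro q hq
        obtain ⟨f, hfbij, hfrel, hf1, hf2⟩ := regular_trans W1 hreg1 hw hp hq
        have hfβ : (f β', f β') ∈ clsOf W1 (β', β') := by
          have hm : (f β', f β') ∈ relImage f (clsOf W1 (β', β')) :=
            ⟨(β', β'), mem_clsOf W1 _, rfl⟩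
          rwa [hfrel _ (clsOf_mem W1 _)] at hm
        have hfβ2 : (f β', f β') ∈ clsOf W2 (β', β') := hfib _ hfβ
        obtain ⟨g, hgbij, hgrel, hguniq⟩ := regular_auto W2 hreg2 hfβ2
        have hgβ : g β' = f β' := hguniq β' (f β') hfβ2
        have hfg : f = g := regular_ext W1 hreg1 hfrel (hW1fromW2 g hgrel) hgβ.symm
        have hmem : (f p.1, f p.2) ∈ relImage g (clsOf W2 p) :=
          ⟨p, mem_clsOf W2 p, by rw [hfg]⟩
        rw [hgrel _ (clsOf_mem W2 p)] at hmem
        have hq' : q = (f p.1, f p.2) := by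
          rw [hf1, hf2]
        rw [hq']
        exact hmem
      · exact hleW w hw _ (clsOf_mem W2 p) ⟨p, mem_clsOf W2 p, hp⟩
    rw [hws]
    exact clsOf_mem W2 p
  -- W2.S ⊆ W1.S
  have hSsub2 : W2.S ⊆ W1.S := by
    intro t ht
    obtain ⟨p, hp⟩ := W2.nonemp t ht
    have h1 : clsOf W1 p ∈ W2.S := hSsub (clsOf_mem W1 p)
    have heq : t = clsOf W1 p := mem_eq W2 ht h1 hp (mem_clsOf W1 p)
    rw [heq]
    exact clsOf_mem W1 p
  exact CohCfg.ext' (Set.Subset.antisymm hSsub hSsub2)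
end

section
/- Let X and X' be schemes, φ : X → X' an algebraic isomorphism having an (α,α')-extension φ_{α,α'} for some points α, α', and let f ∈ Iso_{α,α'}(X, X', φ). Assume that (i) X is schurian, and (ii) (X_α)_𝔖 is partly regular for some section 𝔖 of X with α_𝔖 ≠ ∅. Then, with 𝔖' = 𝔖^f, the set of bijections 𝔖 → 𝔖' induced by elements of Iso(X_α, X'_{α'}, φ_{α,α'}) equals Iso((X_α)_𝔖, (X'_{α'})_{𝔖'}, (φ_{α,α'})_{𝔖,𝔖'}). -/
open Set

universe u

/-!
Let `ψ_f` be the algebraic isomorphism `X_α → X'_{α'}` induced by `f`. The extension `ψ` equals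
`ψ_f`: `ψ_f⁻¹ ∘ ψ` is an algebraic automorphism of `X_α` fixing `1_α` and mapping every basis
relation into the basis relation of `X` containing it, and fusing `X_α` along the orbits of the
group it generates yields a coherent configuration that still contains `X` and `1_α`; minimality
of `X_α` forces these orbits to be trivial. The same argument shows that every automorphism of `X`
fixing `α` fixes every basis relation of `X_α`.

So the isomorphisms in `Iso(X_α, X'_{α'}, ψ)` induce isomorphisms of the sections. Conversely, let
`g` be an isomorphism of the section configurations and `Γ₀` a point where `(X_α)_𝔖` is partly
regular. The class `g(Γ₀)^{f⁻¹}` meets the fiber of `X_α` through a point of `Γ₀`, so by schurity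
some `k ∈ Aut(X)_α` maps `Γ₀` onto it. Then `g` and the bijection induced by `f ∘ k` are two
isomorphisms with the same algebraic isomorphism that agree at `Γ₀`, hence they coincide.
-/

namespace CohCfg

open Equiv MulAction

variable {Ω Ω' Ω'' : Type u}

section Relations

theorem mem_relImage {f : Ω → Ω'} {s : Set (Ω × Ω)} {a b : Ω} (h : (a, b) ∈ s) :
    (f a, f b) ∈ relImage f s :=
  ⟨(a, b), h, rfl⟩

theorem mem_relImage_iff {f : Ω → Ω'} (hf : Function.Injective f) {s : Set (Ω × Ω)}
    {a b : Ω} : (f a, f b) ∈ relImage f s ↔ (a, b) ∈ s :=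
  (hf.prodMap hf).mem_set_image (a := (a, b))

theorem relImage_comp (g : Ω' → Ω'') (f : Ω → Ω') (s : Set (Ω × Ω)) :
    relImage (g ∘ f) s = relImage g (relImage f s) :=
  (image_image (Prod.map g g) (Prod.map f f) s).symm

@[simp]
theorem relImage_symm_relImage (e : Ω ≃ Ω') (s : Set (Ω × Ω)) :
    relImage e.symm (relImage e s) = s := by
  simp [relImage, image_image]

theorem relImage_singleton (f : Ω → Ω') (a b : Ω) : relImage f {(a, b)} = {(f a, f b)} :=
  image_singleton

theorem relImage_swap (f : Ω → Ω') (s : Set (Ω × Ω)) :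
    relImage f (Prod.swap ⁻¹' s) = Prod.swap ⁻¹' relImage f s := by
  ext ⟨x, y⟩
  simp only [relImage, mem_image, mem_preimage, Prod.swap_prod_mk, Prod.exists, Prod.mk.injEq]
  exact ⟨fun ⟨a, b, h, ha, hb⟩ => ⟨b, a, h, hb, ha⟩, fun ⟨a, b, h, ha, hb⟩ => ⟨b, a, h, hb, ha⟩⟩

theorem pointSet_relImage {f : Ω → Ω'} (hf : Function.Injective f) (s : Set (Ω × Ω)) (a : Ω) :
    pointSet (relImage f s) (f a) = f '' pointSet s a := by
  ext y
  constructor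
  · rintro ⟨⟨a', b⟩, hab, he⟩
    simp only [Prod.mk.injEq] at he
    obtain ⟨ha, rfl⟩ := he
    exact ⟨b, hf ha ▸ hab, rfl⟩
  · rintro ⟨b, hb, rfl⟩
    exact mem_relImage hb

theorem image_eClass (e : Ω ≃ Ω') (r : Set (Ω × Ω)) (a : Ω) :
    e '' eClass r a = eClass (relImage e r) (e a) := by
  ext y
  simpa [eClass, relImage, Equiv.image_eq_preimage_symm] using
    (mem_relImage_iff (f := e) e.injective (s := r) (a := a) (b := e.symm y)).symm

end Relations

section Basics

variable {X Y Z : CohCfg Ω}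

theorem ext {X Y : CohCfg Ω} (h : X.S = Y.S) : X = Y := by
  cases X; cases Y; cases h; rfl

theorem eq_of_mem_of_mem {s t : Set (Ω × Ω)} (hs : s ∈ X.S) (ht : t ∈ X.S) {p : Ω × Ω}
    (hps : p ∈ s) (hpt : p ∈ t) : s = t := by
  by_contra hne
  exact (X.disj s hs t ht hne).subset ⟨hps, hpt⟩

theorem exists_superset (hXY : le X Y) {s : Set (Ω × Ω)} (hs : s ∈ Y.S) :
    ∃ t ∈ X.S, s ⊆ t := by
  obtain ⟨p, hp⟩ := Y.nonemp s hs
  obtain ⟨t, ht, hpt⟩ := X.cover p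
  exact ⟨t, ht, hXY t ht s hs ⟨p, hp, hpt⟩⟩

theorem subset_diagonal {t : Set (Ω × Ω)} (ht : t ∈ X.S) {a : Ω} (ha : (a, a) ∈ t) :
    t ⊆ diagonal Ω :=
  X.diag t ht ⟨(a, a), ha, rfl⟩

theorem sUnion_basis_subset {s : Set (Ω × Ω)} (hs : IsRelationOf X s) :
    ⋃₀ {t | t ∈ X.S ∧ t ⊆ s} = s := by
  refine Subset.antisymm (sUnion_subset fun t ht => ht.2) fun p hp => ?_
  obtain ⟨t, ht, hpt⟩ := X.cover p
  exact ⟨t, ⟨ht, hs t ht ⟨p, hpt, hp⟩⟩, hpt⟩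

theorem relImage_eq_self_of_isRelationOf {f : Ω → Ω} (hf : ∀ t ∈ X.S, relImage f t = t)
    {s : Set (Ω × Ω)} (hs : IsRelationOf X s) : relImage f s = s := by
  rw [← sUnion_basis_subset hs, relImage, image_sUnion]
  refine congrArg sUnion (Subset.antisymm ?_ fun t ht => ⟨t, ht, hf t ht.1⟩)
  rintro _ ⟨t, ht, rfl⟩
  change relImage f t ∈ _
  rwa [hf t ht.1]

theorem le.antisymm (hXY : le X Y) (hYX : le Y X) : X = Y := by
  have key : ∀ {X Y : CohCfg Ω}, le X Y → le Y X → X.S ⊆ Y.S := by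
    intro X Y hXY hYX s hs
    obtain ⟨p, hp⟩ := X.nonemp s hs
    obtain ⟨t, ht, hpt⟩ := Y.cover p
    have hts : t ⊆ s := hXY s hs t ht ⟨p, hpt, hp⟩
    have hst : s ⊆ t := hYX t ht s hs ⟨p, hp, hpt⟩
    exact (Subset.antisymm hst hts) ▸ ht
  exact ext (Subset.antisymm (key hXY hYX) (key hYX hXY))

theorem IsPointExt.unique {α : Ω} (hY : IsPointExt X α Y) (hZ : IsPointExt X α Z) : Y = Z :=
  (hY.2.2 Z hZ.1 hZ.2.1).antisymm (hZ.2.2 Y hY.1 hY.2.1)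

theorem exists_mid_of_cnum_eq [Finite Ω] {r s : Set (Ω × Ω)} {r' s' : Set (Ω' × Ω')}
    {p : Ω × Ω} {q : Ω' × Ω'} (h : cnum r s p = cnum r' s' q) {γ : Ω}
    (hγ : (p.1, γ) ∈ r ∧ (γ, p.2) ∈ s) : ∃ γ', (q.1, γ') ∈ r' ∧ (γ', q.2) ∈ s' := by
  have hpos : cnum r s p ≠ 0 := ((Set.ncard_pos (Set.toFinite _)).mpr ⟨γ, hγ⟩).ne'
  rw [h] at hpos
  exact Set.nonempty_of_ncard_ne_zero hpos

theorem fst_eq_of_mem_of_singleton_mem {α a : Ω} (hα : ({(α, α)} : Set (Ω × Ω)) ∈ X.S)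
    {r : Set (Ω × Ω)} (hr : r ∈ X.S) (ha : (α, a) ∈ r) {p : Ω × Ω} (hp : p ∈ r) : p.1 = α := by
  have := X.finite
  obtain ⟨γ, hγ, -⟩ := exists_mid_of_cnum_eq (X.inum _ hα r hr r hr (α, a) ha p hp)
    (γ := α) ⟨rfl, ha⟩
  exact (Prod.ext_iff.mp hγ).1

/-- In a configuration with the basis relation `1_α`, the neighbourhood `αr` of `α` is a
union of fibers. -/
theorem mem_of_singleton_mem {α a c : Ω} (hα : ({(α, α)} : Set (Ω × Ω)) ∈ X.S)
    {r : Set (Ω × Ω)} (hr : r ∈ X.S) (ha : (α, a) ∈ r) {t : Set (Ω × Ω)} (ht : t ∈ X.S)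
    (hat : (a, a) ∈ t) (hct : (c, c) ∈ t) : (α, c) ∈ r := by
  have := X.finite
  obtain ⟨γ, hγc, hγr⟩ := exists_mid_of_cnum_eq
    (X.inum _ (X.conv r hr) r hr t ht (a, a) hat (c, c) hct) (γ := α) ⟨ha, ha⟩
  rwa [← fst_eq_of_mem_of_singleton_mem hα hr ha hγr]

end Basics

section Transport

theorem cnum_relImage (e : Ω ≃ Ω') (r s : Set (Ω × Ω)) (p : Ω × Ω) :
    cnum (relImage e r) (relImage e s) (e p.1, e p.2) = cnum r s p := by
  have hset : {γ' | (e p.1, γ') ∈ relImage e r ∧ (γ', e p.2) ∈ relImage e s} =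
      e '' {γ | (p.1, γ) ∈ r ∧ (γ, p.2) ∈ s} := by
    ext γ'
    obtain ⟨γ, rfl⟩ := e.surjective γ'
    simp only [mem_relImage_iff e.injective, e.injective.mem_set_image, mem_ofPred_eq]
  rw [cnum, hset, Set.ncard_image_of_injective _ e.injective, cnum]

theorem relImage_inter (e : Ω ≃ Ω') (s t : Set (Ω × Ω)) :
    relImage e (s ∩ t) = relImage e s ∩ relImage e t :=
  image_inter (f := fun p : Ω × Ω => (e p.1, e p.2)) (e.injective.prodMap e.injective)

def map (e : Ω ≃ Ω') (X : CohCfg Ω) : CohCfg Ω' where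
  S := relImage e '' X.S
  finite := have := X.finite; Finite.of_equiv Ω e
  cover p := by
    obtain ⟨t, ht, hpt⟩ := X.cover (e.symm p.1, e.symm p.2)
    exact ⟨relImage e t, mem_image_of_mem _ ht, by simpa using mem_relImage (f := e) hpt⟩
  disj := by
    rintro _ ⟨s, hs, rfl⟩ _ ⟨t, ht, rfl⟩ hne
    rw [← relImage_inter, X.disj s hs t ht (fun h => hne (h ▸ rfl))]
    exact image_empty _
  nonemp := by
    rintro _ ⟨s, hs, rfl⟩
    exact (X.nonemp s hs).image _
  diag := by
    rintro _ ⟨s, hs, rfl⟩ ⟨_, ⟨⟨a, b⟩, hab, rfl⟩, hd⟩ _ ⟨⟨c, d⟩, hcd, rfl⟩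
    exact congrArg e (X.diag s hs ⟨(a, b), hab, e.injective hd⟩ (c, d) hcd)
  conv := by
    rintro _ ⟨s, hs, rfl⟩
    exact ⟨_, X.conv s hs, relImage_swap e s⟩
  inum := by
    rintro _ ⟨r, hr, rfl⟩ _ ⟨s, hs, rfl⟩ _ ⟨t, ht, rfl⟩ _ ⟨p, hp, rfl⟩ _ ⟨q, hq, rfl⟩
    exact (cnum_relImage e r s p).trans
      ((X.inum r hr s hs t ht p hp q hq).trans (cnum_relImage e r s q).symm)

@[simp]
theorem map_S (e : Ω ≃ Ω') (X : CohCfg Ω) : (X.map e).S = relImage e '' X.S := rfl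

@[simp]
theorem map_symm_map (e : Ω ≃ Ω') (X : CohCfg Ω) : (X.map e).map e.symm = X :=
  ext (by simp [image_image])

@[simp]
theorem map_map_symm (e : Ω ≃ Ω') (X : CohCfg Ω') : (X.map e.symm).map e = X := by
  simpa using map_symm_map e.symm X

theorem isRelationOf_map {e : Ω ≃ Ω'} {X : CohCfg Ω} {s : Set (Ω × Ω)}
    (hs : IsRelationOf X s) : IsRelationOf (X.map e) (relImage e s) := by
  rintro _ ⟨t, ht, rfl⟩ hts
  rw [← relImage_inter] at hts
  exact image_mono (hs t ht hts.of_image)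

theorem le.map {X Y : CohCfg Ω} (hXY : le X Y) (e : Ω ≃ Ω') : le (X.map e) (Y.map e) := by
  rintro _ ⟨s, hs, rfl⟩
  exact isRelationOf_map (hXY s hs)

theorem IsPointExt.map {X Y : CohCfg Ω} {α : Ω} (hY : IsPointExt X α Y) (e : Ω ≃ Ω') :
    IsPointExt (X.map e) (e α) (Y.map e) := by
  refine ⟨hY.1.map e, ⟨_, hY.2.1, relImage_singleton e α α⟩, fun Z hXZ hαZ => ?_⟩
  have hpull : le Y (Z.map e.symm) := by
    refine hY.2.2 _ (by simpa using hXZ.map e.symm) ⟨_, hαZ, ?_⟩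
    simp [relImage_singleton]
  simpa using hpull.map e

theorem isAlgIso_map (e : Ω ≃ Ω') (X : CohCfg Ω) : IsAlgIso X (X.map e) (relImage e) := by
  refine ⟨⟨mapsTo_image _ _, fun s _ t _ h => ?_, subset_refl _⟩, ?_⟩
  · simpa using congrArg (relImage e.symm) h
  · rintro r hr s hs t ht p hp _ ⟨q, hq, rfl⟩
    exact (X.inum r hr s hs t ht p hp q hq).trans (cnum_relImage e r s q).symm

end Transport

section Fusion

variable {X Y : CohCfg Ω}

def converse (s : Y.S) : Y.S := ⟨Prod.swap ⁻¹' s, Y.conv _ s.2⟩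

theorem subset_diagonal_of_subset {t u : Set (Ω × Ω)} (ht : t ∈ X.S) (hu : u.Nonempty)
    (hud : u ⊆ diagonal Ω) (hut : u ⊆ t) : t ⊆ diagonal Ω := by
  obtain ⟨p, hp⟩ := hu
  exact X.diag t ht ⟨p, hut hp, hud hp⟩

def algAutOver (X Y : CohCfg Ω) : Subgroup (Perm Y.S) where
  carrier := {π | (∀ r s t : Y.S, ∀ p ∈ (t : Set (Ω × Ω)), ∀ q ∈ (π t : Set (Ω × Ω)),
      cnum r s p = cnum (π r) (π s) q) ∧
    ∀ s : Y.S, ∀ t ∈ X.S, (π s : Set (Ω × Ω)) ⊆ t ↔ (s : Set (Ω × Ω)) ⊆ t}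
  one_mem' := ⟨fun r s t p hp q hq => Y.inum r r.2 s s.2 t t.2 p hp q hq, fun _ _ _ => Iff.rfl⟩
  mul_mem' := by
    rintro π₁ π₂ ⟨hc₁, hs₁⟩ ⟨hc₂, hs₂⟩
    refine ⟨fun r s t p hp q hq => ?_, fun s t ht => (hs₁ _ t ht).trans (hs₂ s t ht)⟩
    obtain ⟨m, hm⟩ := Y.nonemp _ (π₂ t).2
    exact (hc₂ r s t p hp m hm).trans (hc₁ _ _ _ m hm q hq)
  inv_mem' := by
    rintro π ⟨hc, hs⟩
    refine ⟨fun r s t p hp q hq => ?_, fun s t ht => ?_⟩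
    · simpa using (hc (π⁻¹ r) (π⁻¹ s) (π⁻¹ t) q hq p (by simpa using hp)).symm
    · simpa using (hs (π⁻¹ s) t ht).symm

theorem algAutOver.subset_diagonal_iff (hXY : le X Y) {π : Perm Y.S} (hπ : π ∈ algAutOver X Y)
    (s : Y.S) : (π s : Set (Ω × Ω)) ⊆ diagonal Ω ↔ (s : Set (Ω × Ω)) ⊆ diagonal Ω := by
  obtain ⟨t, ht, hst⟩ := exists_superset hXY s.2
  have hπst := (hπ.2 s t ht).mpr hst
  exact ⟨fun h => hst.trans (subset_diagonal_of_subset ht (Y.nonemp _ (π s).2) h hπst),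
    fun h => hπst.trans (subset_diagonal_of_subset ht (Y.nonemp _ s.2) h hst)⟩

theorem algAutOver.apply_converse (hXY : le X Y) {π : Perm Y.S} (hπ : π ∈ algAutOver X Y)
    (s : Y.S) : π (converse s) = converse (π s) := by
  have := Y.finite
  obtain ⟨⟨x, y⟩, hxy⟩ := Y.nonemp _ s.2
  obtain ⟨t, ht, hxt⟩ := Y.cover (x, x)
  have hπt : (π ⟨t, ht⟩ : Set (Ω × Ω)) ⊆ diagonal Ω :=
    (algAutOver.subset_diagonal_iff hXY hπ ⟨t, ht⟩).mpr (subset_diagonal ht hxt)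
  obtain ⟨⟨z, z'⟩, hz⟩ := Y.nonemp _ (π ⟨t, ht⟩).2
  obtain rfl : z = z' := hπt hz
  obtain ⟨γ, hzγ, hγz⟩ := exists_mid_of_cnum_eq
    (hπ.1 s (converse s) ⟨t, ht⟩ (x, x) hxt (z, z) hz) (γ := y) ⟨hxy, hxy⟩
  exact Subtype.ext (eq_of_mem_of_mem (π _).2 (converse (π s)).2 hγz hzγ)

def fuse (G : Subgroup (Perm Y.S)) (s : Y.S) : Set (Ω × Ω) :=
  ⋃ u ∈ orbit G s, (u : Set (Ω × Ω))

variable {G : Subgroup (Perm Y.S)}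

theorem mem_fuse {s : Y.S} {p : Ω × Ω} : p ∈ fuse G s ↔ ∃ u ∈ orbit G s, p ∈ (u : Set _) := by
  simp [fuse]

theorem subset_fuse {s u : Y.S} (hu : u ∈ orbit G s) : (u : Set (Ω × Ω)) ⊆ fuse G s :=
  fun _ hp => mem_fuse.mpr ⟨u, hu, hp⟩

theorem fuse_eq_of_mem {s u : Y.S} (hu : u ∈ orbit G s) : fuse G u = fuse G s := by
  rw [fuse, fuse, orbit_eq_iff.mpr hu]

theorem fuse_subset (hG : G ≤ algAutOver X Y) {s : Y.S} {t : Set (Ω × Ω)} (ht : t ∈ X.S)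
    (hst : (s : Set (Ω × Ω)) ⊆ t) : fuse G s ⊆ t := by
  rintro p hp
  obtain ⟨_, ⟨g, rfl⟩, hpu⟩ := mem_fuse.mp hp
  exact ((hG g.2).2 s t ht).mpr hst hpu

theorem fuse_eq_fuse {s s' : Y.S} {p : Ω × Ω} (hp : p ∈ fuse G s) (hp' : p ∈ fuse G s') :
    fuse G s = fuse G s' := by
  obtain ⟨u, hu, hpu⟩ := mem_fuse.mp hp
  obtain ⟨u', hu', hpu'⟩ := mem_fuse.mp hp'
  obtain rfl : u = u' := Subtype.ext (eq_of_mem_of_mem u.2 u'.2 hpu hpu')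
  rw [← fuse_eq_of_mem hu, fuse_eq_of_mem hu']

theorem fuse_converse (hXY : le X Y) (hG : G ≤ algAutOver X Y) (s : Y.S) :
    fuse G (converse s) = Prod.swap ⁻¹' fuse G s := by
  have hsmul : ∀ g : G, g • converse s = converse (g • s) :=
    fun g => algAutOver.apply_converse hXY (hG g.2) s
  ext p
  simp only [mem_preimage, mem_fuse, orbit, mem_range, exists_exists_eq_and, hsmul]
  rfl

theorem ncard_mid_biUnion_eq_finsum_cnum [Finite Ω] (A B : Set Y.S) (x y : Ω) :
    {γ | (x, γ) ∈ ⋃ a ∈ A, (a : Set (Ω × Ω)) ∧ (γ, y) ∈ ⋃ b ∈ B, (b : Set (Ω × Ω))}.ncard =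
      ∑ᶠ i : A × B, cnum i.1.1 i.2.1 (x, y) := by
  have hset : {γ | (x, γ) ∈ ⋃ a ∈ A, (a : Set (Ω × Ω)) ∧ (γ, y) ∈ ⋃ b ∈ B, (b : Set (Ω × Ω))} =
      ⋃ i : A × B, {γ | (x, γ) ∈ (i.1.1 : Set (Ω × Ω)) ∧ (γ, y) ∈ (i.2.1 : Set (Ω × Ω))} := by
    ext γ
    simp
  rw [hset, Set.ncard_iUnion_of_finite (fun _ => Set.toFinite _)]
  · rfl
  · rintro ⟨a, b⟩ ⟨a', b'⟩ hne
    refine Set.disjoint_left.mpr fun γ ⟨h₁, h₂⟩ ⟨h₃, h₄⟩ => hne ?_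
    have ha : a = a' := Subtype.ext (Subtype.ext (eq_of_mem_of_mem a.1.2 a'.1.2 h₁ h₃))
    have hb : b = b' := Subtype.ext (Subtype.ext (eq_of_mem_of_mem b.1.2 b'.1.2 h₂ h₄))
    rw [ha, hb]

theorem ncard_mid_fuse_eq (hG : G ≤ algAutOver X Y) (r s : Y.S) {t : Y.S} {p q : Ω × Ω}
    (hp : p ∈ fuse G t) (hq : q ∈ fuse G t) :
    {γ | (p.1, γ) ∈ fuse G r ∧ (γ, p.2) ∈ fuse G s}.ncard =
      {γ | (q.1, γ) ∈ fuse G r ∧ (γ, q.2) ∈ fuse G s}.ncard := by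
  have := Y.finite
  obtain ⟨u, hu, hpu⟩ := mem_fuse.mp hp
  obtain ⟨u', hu', hqu'⟩ := mem_fuse.mp hq
  obtain ⟨g, rfl⟩ : u' ∈ orbit G u := (orbit_eq_iff.mpr hu).symm ▸ hu'
  rw [fuse, fuse, ncard_mid_biUnion_eq_finsum_cnum, ncard_mid_biUnion_eq_finsum_cnum]
  refine (finsum_congr fun i : orbit G r × orbit G s =>
    (hG g.2).1 i.1 i.2 u p hpu _ hqu').trans ?_
  exact finsum_comp_equiv ((toPerm g).prodCongr (toPerm g))
    (f := fun i : orbit G r × orbit G s => cnum i.1.1 i.2.1 q)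

def fusion (hXY : le X Y) (G : Subgroup (Perm Y.S)) (hG : G ≤ algAutOver X Y) : CohCfg Ω where
  S := range (fuse G)
  finite := Y.finite
  cover p := by
    obtain ⟨s, hs, hps⟩ := Y.cover p
    exact ⟨_, mem_range_self ⟨s, hs⟩, subset_fuse (mem_orbit_self _) hps⟩
  disj := by
    rintro _ ⟨s, rfl⟩ _ ⟨s', rfl⟩ hne
    exact eq_empty_iff_forall_notMem.mpr fun p ⟨hp, hp'⟩ => hne (fuse_eq_fuse hp hp')
  nonemp := by
    rintro _ ⟨s, rfl⟩
    exact (Y.nonemp _ s.2).mono (subset_fuse (mem_orbit_self s))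
  diag := by
    rintro _ ⟨s, rfl⟩ ⟨p, hp, hpd⟩
    obtain ⟨t, ht, hst⟩ := exists_superset hXY s.2
    have htd : t ⊆ diagonal Ω := X.diag t ht ⟨p, fuse_subset hG ht hst hp, hpd⟩
    exact fun q hq => htd (fuse_subset hG ht hst hq)
  conv := by
    rintro _ ⟨s, rfl⟩
    exact ⟨converse s, fuse_converse hXY hG s⟩
  inum := by
    rintro _ ⟨r, rfl⟩ _ ⟨s, rfl⟩ _ ⟨t, rfl⟩ p hp q hq
    exact ncard_mid_fuse_eq hG r s hp hq

theorem le_fusion (hXY : le X Y) (hG : G ≤ algAutOver X Y) : le X (fusion hXY G hG) := by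
  rintro t ht _ ⟨s, rfl⟩ ⟨p, hp, hpt⟩
  obtain ⟨u, hu, hpu⟩ := mem_fuse.mp hp
  rw [← fuse_eq_of_mem hu]
  exact fuse_subset hG ht (hXY t ht u u.2 ⟨p, hpu, hpt⟩)

theorem singleton_mem_fusion (hXY : le X Y) (hG : G ≤ algAutOver X Y) {α : Ω}
    (hα : ({(α, α)} : Set (Ω × Ω)) ∈ Y.S) (hGα : G ≤ stabilizer (Perm Y.S) (⟨_, hα⟩ : Y.S)) :
    {(α, α)} ∈ (fusion hXY G hG).S := by
  refine ⟨⟨_, hα⟩, Subset.antisymm (fun p hp => ?_)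
    (subset_fuse (G := G) (mem_orbit_self (⟨_, hα⟩ : Y.S)))⟩
  obtain ⟨_, ⟨g, rfl⟩, hpu⟩ := mem_fuse.mp hp
  have hg : g • (⟨_, hα⟩ : Y.S) = ⟨_, hα⟩ := mem_stabilizer_iff.mp (hGα g.2)
  simpa [hg] using hpu

theorem eq_one_of_le_fusion (hXY : le X Y) (hG : G ≤ algAutOver X Y)
    (hYF : le Y (fusion hXY G hG)) {g : Perm Y.S} (hg : g ∈ G) : g = 1 := by
  ext1 s
  have hsub : fuse G s ⊆ s := hYF s s.2 _ ⟨s, rfl⟩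
    ((Y.nonemp _ s.2).mono fun p hp => ⟨subset_fuse (mem_orbit_self s) hp, hp⟩)
  have hgs : (g s : Set (Ω × Ω)) ⊆ s := (subset_fuse (mem_orbit_of_mem_orbit ⟨g, hg⟩
    (mem_orbit_self s))).trans hsub
  obtain ⟨p, hp⟩ := Y.nonemp _ (g s).2
  exact Subtype.ext (eq_of_mem_of_mem (g s).2 s.2 hp (hgs hp))

/-- The fusion by the group generated by `π` contains `X` and `1_α`, so by minimality it is no
coarser than `X_α`. -/
theorem IsPointExt.eq_one_of_mem_algAutOver {α : Ω} (hY : IsPointExt X α Y) {π : Perm Y.S}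
    (hπ : π ∈ algAutOver X Y) (hπα : π ⟨_, hY.2.1⟩ = ⟨_, hY.2.1⟩) : π = 1 := by
  have hG : Subgroup.zpowers π ≤ algAutOver X Y := Subgroup.zpowers_le.mpr hπ
  have hGα : Subgroup.zpowers π ≤ stabilizer (Perm Y.S) (⟨_, hY.2.1⟩ : Y.S) :=
    Subgroup.zpowers_le.mpr hπα
  exact eq_one_of_le_fusion hY.1 hG
    (hY.2.2 _ (le_fusion hY.1 hG) (singleton_mem_fusion hY.1 hG hY.2.1 hGα))
    (Subgroup.mem_zpowers π)

end Fusion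

section Extension

variable {X Y : CohCfg Ω} {X' Y' : CohCfg Ω'} {φ ψ : Set (Ω × Ω) → Set (Ω' × Ω')}

theorem isAlgIso_id (X : CohCfg Ω) : IsAlgIso X X id :=
  ⟨bijOn_id _, fun r hr s hs t ht p hp q hq => X.inum r hr s hs t ht p hp q hq⟩

theorem algImage_id {t : Set (Ω × Ω)} (ht : IsRelationOf Y t) : algImage Y id t = t := by
  rw [algImage, image_id, sUnion_basis_subset ht]

theorem algImage_relImage (e : Ω ≃ Ω') {t : Set (Ω × Ω)} (ht : IsRelationOf Y t) :
    algImage Y (relImage e) t = relImage e t := by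
  conv_rhs => rw [← sUnion_basis_subset ht]
  rw [algImage, relImage, image_sUnion]
  rfl

theorem subset_iff_of_algImage (hφ : IsAlgIso X X' φ) (hψ : IsAlgIso Y Y' ψ) (hXY : le X Y)
    (hext : ∀ t ∈ X.S, algImage Y ψ t = φ t) {s t : Set (Ω × Ω)} (hs : s ∈ Y.S)
    (ht : t ∈ X.S) : ψ s ⊆ φ t ↔ s ⊆ t := by
  have hsub : ∀ {t}, t ∈ X.S → s ⊆ t → ψ s ⊆ φ t := fun ht hst =>
    hext _ ht ▸ subset_sUnion_of_mem ⟨s, ⟨hs, hst⟩, rfl⟩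
  refine ⟨fun h => ?_, hsub ht⟩
  obtain ⟨t', ht', hst'⟩ := exists_superset hXY hs
  obtain ⟨p, hp⟩ := Y'.nonemp _ (hψ.bijOn.mapsTo hs)
  rwa [hφ.bijOn.injOn ht ht' (eq_of_mem_of_mem (hφ.bijOn.mapsTo ht) (hφ.bijOn.mapsTo ht')
    (h hp) (hsub ht' hst' hp))]

/-- `ψ₂⁻¹ ∘ ψ₁` is an algebraic automorphism of `X_α` over `X` fixing `1_α`. -/
theorem IsPointExt.eqOn_of_isAlgIso {α : Ω} {α' : Ω'} (hφ : IsAlgIso X X' φ)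
    (hY : IsPointExt X α Y) {ψ₁ ψ₂ : Set (Ω × Ω) → Set (Ω' × Ω')}
    (hψ₁ : IsAlgIso Y Y' ψ₁) (hψ₂ : IsAlgIso Y Y' ψ₂)
    (hext₁ : ∀ t ∈ X.S, algImage Y ψ₁ t = φ t) (hext₂ : ∀ t ∈ X.S, algImage Y ψ₂ t = φ t)
    (hα₁ : ψ₁ {(α, α)} = {(α', α')}) (hα₂ : ψ₂ {(α, α)} = {(α', α')}) : EqOn ψ₁ ψ₂ Y.S := by
  set π : Perm Y.S := (hψ₁.bijOn.equiv _).trans (hψ₂.bijOn.equiv _).symm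
  have hπ : ∀ s : Y.S, ψ₂ (π s) = ψ₁ s := fun s =>
    congrArg Subtype.val ((hψ₂.bijOn.equiv _).apply_symm_apply (hψ₁.bijOn.equiv _ s))
  have hmem : π ∈ algAutOver X Y := by
    refine ⟨fun r s t p hp q hq => ?_, fun s t ht => ?_⟩
    · obtain ⟨q', hq'⟩ := Y'.nonemp _ (hψ₂.bijOn.mapsTo (π t).2)
      rw [hψ₁.cnum_eq r r.2 s s.2 t t.2 p hp q' (hπ t ▸ hq'),
        hψ₂.cnum_eq _ (π r).2 _ (π s).2 _ (π t).2 q hq q' hq', hπ, hπ]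
    · rw [← subset_iff_of_algImage hφ hψ₂ hY.1 hext₂ (π s).2 ht, hπ,
        subset_iff_of_algImage hφ hψ₁ hY.1 hext₁ s.2 ht]
  have hπα : π ⟨_, hY.2.1⟩ = ⟨_, hY.2.1⟩ :=
    Subtype.ext (hψ₂.bijOn.injOn (π _).2 hY.2.1 ((hπ _).trans (hα₁.trans hα₂.symm)))
  have hπ1 := hY.eq_one_of_mem_algAutOver hmem hπα
  intro s hs
  simpa [hπ1] using (hπ ⟨s, hs⟩).symm

theorem extension_eq_relImage {α : Ω} {α' : Ω'} (hφ : IsAlgIso X X' φ)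
    (hY : IsPointExt X α Y) (hY' : IsPointExt X' α' Y') (hψ : IsAlgIso Y Y' ψ)
    (hext : ∀ t ∈ X.S, algImage Y ψ t = φ t) (hψα : ψ {(α, α)} = {(α', α')})
    {f : Ω → Ω'} (hf : f ∈ IsoSet X X' φ) (hfα : f α = α') : ∀ s ∈ Y.S, ψ s = relImage f s := by
  set e := Equiv.ofBijective f hf.1
  have hX' : X.map e = X' := ext (by rw [map_S, ← hφ.bijOn.image_eq]; exact image_congr hf.2)
  have hYe : IsPointExt X' α' (Y.map e) := hX' ▸ hfα ▸ hY.map e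
  refine hY.eqOn_of_isAlgIso hφ hψ (hYe.unique hY' ▸ isAlgIso_map e Y) hext
    (fun t ht => (algImage_relImage e (hY.1 t ht)).trans (hf.2 t ht)) hψα ?_
  rw [relImage_singleton]
  exact congrArg _ (congrArg₂ Prod.mk hfα hfα)

theorem IsPointExt.relImage_eq_self {α : Ω} (hY : IsPointExt X α Y) {k : Perm Ω}
    (hkX : ∀ t ∈ X.S, relImage k t = t) (hkα : k α = α) : ∀ s ∈ Y.S, relImage k s = s :=
  fun s hs => (extension_eq_relImage (isAlgIso_id X) hY hY (isAlgIso_id Y)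
    (fun t ht => algImage_id (hY.1 t ht)) rfl ⟨k.bijective, hkX⟩ hkα s hs).symm

end Extension

section Sections

variable {Δ : Set Ω} {e : Set (Ω × Ω)} {Δ' : Set Ω'} {e' : Set (Ω' × Ω')}

theorem IsParabolic.eClass_eq {X : CohCfg Ω} (he : IsParabolic X e) {a b : Ω}
    (h : b ∈ eClass e a) : eClass e b = eClass e a :=
  Set.ext fun c => ⟨fun hc => he.2.2.2 a b c h hc, fun hc => he.2.2.2 b a c (he.2.2.1 (a, b) h) hc⟩

def Sec.map (h : Ω ≃ Ω') (hΔ : h '' Δ = Δ') (he : relImage h e = e') : Sec Δ e → Sec Δ' e' :=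
  fun Γ => ⟨h '' Γ.1, by
    obtain ⟨a, ha, hΓ⟩ := Γ.2
    exact ⟨h a, hΔ ▸ mem_image_of_mem h ha, by rw [hΓ, image_eClass, he]⟩⟩

@[simp]
theorem Sec.coe_map (h : Ω ≃ Ω') (hΔ : h '' Δ = Δ') (he : relImage h e = e') (Γ : Sec Δ e) :
    (Sec.map h hΔ he Γ).1 = h '' Γ.1 := rfl

theorem Sec.map_bijective (h : Ω ≃ Ω') (hΔ : h '' Δ = Δ') (he : relImage h e = e') :
    Function.Bijective (Sec.map h hΔ he) := by
  refine ⟨fun Γ Λ hΓΛ => Subtype.ext (h.injective.image_injective (congrArg Subtype.val hΓΛ)),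
    fun Γ' => ?_⟩
  obtain ⟨a', ha', hΓ'⟩ := Γ'.2
  obtain ⟨a, ha, rfl⟩ : a' ∈ h '' Δ := hΔ ▸ ha'
  exact ⟨⟨eClass e a, a, ha, rfl⟩, Subtype.ext (by rw [hΓ', Sec.coe_map, image_eClass, he])⟩

theorem secRel_relImage (h : Ω ≃ Ω') (hΔ : h '' Δ = Δ') (he : relImage h e = e')
    (s : Set (Ω × Ω)) :
    secRel Δ' e' (relImage h s) = relImage (Sec.map h hΔ he) (secRel Δ e s) := by
  ext ⟨Γ', Λ'⟩
  obtain ⟨Γ, rfl⟩ := (Sec.map_bijective h hΔ he).2 Γ'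
  obtain ⟨Λ, rfl⟩ := (Sec.map_bijective h hΔ he).2 Λ'
  rw [mem_relImage_iff (Sec.map_bijective h hΔ he).1]
  simp only [secRel, mem_ofPred_eq, Sec.coe_map, exists_mem_image, mem_relImage_iff h.injective]

theorem Sec.map_mem_isoSet {Y : CohCfg Ω} {Y' : CohCfg Ω'} {ψ : Set (Ω × Ω) → Set (Ω' × Ω')}
    {h : Ω ≃ Ω'} (hh : ⇑h ∈ IsoSet Y Y' ψ) (hΔ : h '' Δ = Δ') (he : relImage h e = e')
    {YS : CohCfg (Sec Δ e)} (hYS : IsSectionCfg Y Δ e YS) {Y'S : CohCfg (Sec Δ' e')}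
    {ψS : Set (Sec Δ e × Sec Δ e) → Set (Sec Δ' e' × Sec Δ' e')}
    (hψS : ∀ s ∈ Y.S, (secRel Δ e s).Nonempty → ψS (secRel Δ e s) = secRel Δ' e' (ψ s)) :
    Sec.map h hΔ he ∈ IsoSet YS Y'S ψS := by
  refine ⟨Sec.map_bijective h hΔ he, fun t ht => ?_⟩
  rw [hYS] at ht
  obtain ⟨s, hs, rfl, hne⟩ := ht
  rw [hψS s hs hne, ← hh.2 s hs, secRel_relImage h hΔ he]

theorem eq_of_mem_isoSet_of_apply_eq {Y : CohCfg Ω} {Y' : CohCfg Ω'}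
    {ψ : Set (Ω × Ω) → Set (Ω' × Ω')} {g₁ g₂ : Ω → Ω'} (h₁ : g₁ ∈ IsoSet Y Y' ψ)
    (h₂ : g₂ ∈ IsoSet Y Y' ψ) {β : Ω} (hβ : ∀ s ∈ Y.S, (pointSet s β).ncard ≤ 1)
    (h : g₁ β = g₂ β) : g₁ = g₂ := by
  have := Y.finite
  funext δ
  obtain ⟨s, hs, hβδ⟩ := Y.cover (β, δ)
  have hmem₁ : g₁ δ ∈ pointSet (relImage g₁ s) (g₁ β) := mem_relImage hβδ
  have hmem₂ : g₂ δ ∈ pointSet (relImage g₁ s) (g₁ β) := by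
    rw [h, h₁.2 s hs, ← h₂.2 s hs]
    exact mem_relImage hβδ
  rw [pointSet_relImage h₁.1.1] at hmem₁ hmem₂
  exact (Set.ncard_le_one_iff ((Set.toFinite _).image _)).mp
    ((Set.ncard_image_of_injective _ h₁.1.1).trans_le (hβ s hs)) hmem₁ hmem₂

end Sections

section Schurian

variable {X Xα : CohCfg Ω} {α : Ω}

theorem exists_aut_apply_eq (hXα : IsPointExt X α Xα) (hschur : Schurian X) {s : Set (Ω × Ω)}
    (hs : s ∈ Xα.S) {a c : Ω} (has : (a, a) ∈ s) (hcs : (c, c) ∈ s) :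
    ∃ k : Perm Ω, (∀ t ∈ X.S, relImage k t = t) ∧ k α = α ∧ k a = c := by
  obtain ⟨r, hr, har⟩ := Xα.cover (α, a)
  have hcr : (α, c) ∈ r := mem_of_singleton_mem hXα.2.1 hr har hs has hcs
  obtain ⟨t, ht, hrt⟩ := exists_superset hXα.1 hr
  obtain ⟨k, ⟨hk, hkX⟩, hkac⟩ := hschur t ht _ (hrt har) _ (hrt hcr)
  exact ⟨Equiv.ofBijective k hk, hkX, (Prod.ext_iff.mp hkac).1, (Prod.ext_iff.mp hkac).2⟩

theorem image_eq_of_isSection {Δ : Set Ω} {e : Set (Ω × Ω)} (hsec : IsSection X Δ e)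
    (hα : α ∈ Δ) {k : Ω ≃ Ω} (hkX : ∀ t ∈ X.S, relImage k t = t) (hkα : k α = α) :
    k '' Δ = Δ ∧ relImage k e = e := by
  obtain ⟨he, d, hd, -, b, rfl⟩ := hsec
  refine ⟨?_, relImage_eq_self_of_isRelationOf hkX he.1⟩
  rw [← hd.eClass_eq hα, image_eClass, relImage_eq_self_of_isRelationOf hkX hd.1, hkα]

variable {X'α' : CohCfg Ω'} {ψ : Set (Ω × Ω) → Set (Ω' × Ω')} {Δ : Set Ω} {e : Set (Ω × Ω)}
  {Δ' : Set Ω'} {e' : Set (Ω' × Ω')} {YS : CohCfg (Sec Δ e)} {Y'S : CohCfg (Sec Δ' e')}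
  {ψS : Set (Sec Δ e × Sec Δ e) → Set (Sec Δ' e' × Sec Δ' e')}

theorem exists_diag_mem_of_mem_isoSet {f : Ω ≃ Ω'} (hf : ⇑f ∈ IsoSet Xα X'α' ψ)
    (hYS : IsSectionCfg Xα Δ e YS)
    (hψS : ∀ s ∈ Xα.S, (secRel Δ e s).Nonempty → ψS (secRel Δ e s) = secRel Δ' e' (ψ s))
    {g : Sec Δ e → Sec Δ' e'} (hg : g ∈ IsoSet YS Y'S ψS) {Γ : Sec Δ e} {a : Ω}
    (ha : a ∈ Γ.1) : ∃ c, f c ∈ (g Γ).1 ∧ ∃ s ∈ Xα.S, (a, a) ∈ s ∧ (c, c) ∈ s := by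
  obtain ⟨s, hs, has⟩ := Xα.cover (a, a)
  have hΓ : (Γ, Γ) ∈ secRel Δ e s := ⟨a, ha, a, ha, has⟩
  have hgΓ : (g Γ, g Γ) ∈ secRel Δ' e' (relImage f s) := by
    rw [hf.2 s hs, ← hψS s hs ⟨_, hΓ⟩, ← hg.2 _ (hYS ▸ ⟨s, hs, rfl, ⟨_, hΓ⟩⟩)]
    exact mem_relImage hΓ
  obtain ⟨_, hx, _, -, ⟨c, d⟩, hcd, hcd'⟩ := hgΓ
  obtain ⟨rfl, rfl⟩ := Prod.ext_iff.mp hcd'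
  obtain rfl : c = d := Xα.diag s hs ⟨_, has, rfl⟩ (c, d) hcd
  exact ⟨c, hx, s, hs, has, hcd⟩

/-- Choose `k` so that `g` and the map induced by `f ∘ k` agree at the partly regular point
`Γ₀`. -/
theorem exists_induced_of_mem_isoSet (hXα : IsPointExt X α Xα) (hschur : Schurian X)
    (hsec : IsSection X Δ e) (hα : α ∈ Δ) {f : Ω ≃ Ω'} (hf : ⇑f ∈ IsoSet Xα X'α' ψ)
    (hΔ : f '' Δ = Δ') (he : relImage f e = e') (hYS : IsSectionCfg Xα Δ e YS)
    (hψS : ∀ s ∈ Xα.S, (secRel Δ e s).Nonempty → ψS (secRel Δ e s) = secRel Δ' e' (ψ s))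
    {Γ₀ : Sec Δ e} (hΓ₀ : ∀ s ∈ YS.S, (pointSet s Γ₀).ncard ≤ 1)
    {g : Sec Δ e → Sec Δ' e'} (hg : g ∈ IsoSet YS Y'S ψS) :
    ∃ h : Ω ≃ Ω', ⇑h ∈ IsoSet Xα X'α' ψ ∧ h '' Δ = Δ' ∧ relImage h e = e' ∧
      ∀ Γ : Sec Δ e, (g Γ).1 = h '' Γ.1 := by
  obtain ⟨a, -, hΓ₀a⟩ := Γ₀.2
  have ha : a ∈ Γ₀.1 := by rw [hΓ₀a]; exact hsec.1.2.1 a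
  obtain ⟨c, hc, s, hs, has, hcs⟩ := exists_diag_mem_of_mem_isoSet hf hYS hψS hg ha
  obtain ⟨Γ₁, hΓ₁⟩ := (Sec.map_bijective f hΔ he).2 (g Γ₀)
  obtain ⟨c₁, -, hΓ₁c₁⟩ := Γ₁.2
  have hc₁ : c ∈ eClass e c₁ := by
    rwa [← hΓ₁, Sec.coe_map, hΓ₁c₁, f.injective.mem_set_image] at hc
  obtain ⟨k, hkX, hkα, hka⟩ := exists_aut_apply_eq hXα hschur hs has hcs
  obtain ⟨hkΔ, hke⟩ := image_eq_of_isSection hsec hα hkX hkα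
  set h := k.trans f
  have hh : ⇑h ∈ IsoSet Xα X'α' ψ := ⟨h.bijective, fun s hs => by
    rw [coe_trans, relImage_comp, hXα.relImage_eq_self hkX hkα s hs, hf.2 s hs]⟩
  have hhΔ : h '' Δ = Δ' := by rw [coe_trans, image_comp, hkΔ, hΔ]
  have hhe : relImage h e = e' := by rw [coe_trans, relImage_comp, hke, he]
  have hgh : g = Sec.map h hhΔ hhe := by
    refine eq_of_mem_isoSet_of_apply_eq hg (Sec.map_mem_isoSet hh hhΔ hhe hYS hψS) hΓ₀ ?_
    refine Subtype.ext ?_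
    rw [← hΓ₁, Sec.coe_map, Sec.coe_map, hΓ₁c₁, hΓ₀a, coe_trans, image_comp, image_eClass k,
      hke, hka, hsec.1.eClass_eq hc₁]
  exact ⟨h, hh, hhΔ, hhe, fun Γ => by rw [hgh]; rfl⟩

end Schurian

end CohCfg

open CohCfg in
theorem stmt_9_general {Ω Ω' : Type u} (X : CohCfg Ω) (X' : CohCfg Ω')
    (φ : Set (Ω × Ω) → Set (Ω' × Ω')) (hφ : IsAlgIso X X' φ)
    (α : Ω) (α' : Ω')
    -- the (α,α')-extension ψ = φ_{α,α'} of φ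
    (Xα : CohCfg Ω) (hXα : IsPointExt X α Xα)
    (X'α' : CohCfg Ω') (hX'α' : IsPointExt X' α' X'α')
    (ψ : Set (Ω × Ω) → Set (Ω' × Ω')) (hψ : IsAlgIso Xα X'α' ψ)
    (hψext : ∀ s ∈ X.S, algImage Xα ψ s = φ s)
    (hψα : ψ {(α, α)} = {(α', α')})
    -- f ∈ Iso_{α,α'}(X,X',φ)
    (f : Ω → Ω') (hf : f ∈ IsoSet X X' φ) (hfα : f α = α')
    -- (i) X is schurian
    (hschur : Schurian X)
    -- the section 𝔖 = Δ/e with α_𝔖 ≠ ∅, and 𝔖' = 𝔖^f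
    (Δ : Set Ω) (e : Set (Ω × Ω)) (hsec : IsSection X Δ e) (hα : α ∈ Δ)
    (Δ' : Set Ω') (e' : Set (Ω' × Ω')) (hΔ' : Δ' = f '' Δ) (he' : e' = relImage f e)
    -- (X_α)_𝔖 and (X'_{α'})_{𝔖'}
    (YS : CohCfg (Sec Δ e)) (hYS : IsSectionCfg Xα Δ e YS)
    -- (ii) (X_α)_𝔖 is partly regular
    (hpr : PartlyRegular YS)
    (Y'S : CohCfg (Sec Δ' e'))
    -- the induced algebraic isomorphism ψ_{𝔖,𝔖'}
    (ψS : Set (Sec Δ e × Sec Δ e) → Set (Sec Δ' e' × Sec Δ' e'))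
    (hψS : ∀ s ∈ Xα.S, (secRel Δ e s).Nonempty →
      ψS (secRel Δ e s) = secRel Δ' e' (ψ s)) :
    {g : Sec Δ e → Sec Δ' e' | ∃ h ∈ IsoSet Xα X'α' ψ,
        h '' Δ = Δ' ∧ relImage h e = e' ∧ ∀ Γ : Sec Δ e, (g Γ).1 = h '' Γ.1} =
    IsoSet YS Y'S ψS := by
  have hfψ : ⇑(Equiv.ofBijective f hf.1) ∈ IsoSet Xα X'α' ψ :=
    ⟨hf.1, fun s hs => (extension_eq_relImage hφ hXα hX'α' hψ hψext hψα hf hfα s hs).symm⟩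
  obtain ⟨Γ₀, hΓ₀⟩ := hpr
  ext g
  constructor
  · rintro ⟨h, hh, hhΔ, hhe, hg⟩
    have hgh : g = Sec.map (Equiv.ofBijective h hh.1) hhΔ hhe :=
      funext fun Γ => Subtype.ext (hg Γ)
    exact hgh ▸ Sec.map_mem_isoSet hh hhΔ hhe hYS hψS
  · intro hg
    obtain ⟨h, hh, hhΔ, hhe, hgh⟩ :=
      exists_induced_of_mem_isoSet hXα hschur hsec hα hfψ hΔ'.symm he'.symm hYS hψS hΓ₀ hg
    exact ⟨h, hh, hhΔ, hhe, hgh⟩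

open CohCfg in
/-- Lemma: let `φ : X → X'` be an algebraic isomorphism between schemes with an
`(α,α')`-extension `ψ : X_α → X'_{α'}`, `f ∈ Iso_{α,α'}(X,X',φ)`, `X` schurian,
and `(X_α)_𝔖` partly regular for a section `𝔖 = Δ/e` with `α ∈ Δ`.  Then the
bijections `𝔖 → 𝔖' = 𝔖^f` induced by elements of `Iso(X_α, X'_{α'}, ψ)` are
exactly `Iso((X_α)_𝔖, (X'_{α'})_{𝔖'}, ψ_{𝔖,𝔖'})`. -/
theorem stmt_9 {Ω Ω' : Type u} (X : CohCfg Ω) (X' : CohCfg Ω')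
    (hX : IsScheme X) (hX' : IsScheme X')
    (φ : Set (Ω × Ω) → Set (Ω' × Ω')) (hφ : IsAlgIso X X' φ)
    (α : Ω) (α' : Ω')
    -- the (α,α')-extension ψ = φ_{α,α'} of φ
    (Xα : CohCfg Ω) (hXα : IsPointExt X α Xα)
    (X'α' : CohCfg Ω') (hX'α' : IsPointExt X' α' X'α')
    (ψ : Set (Ω × Ω) → Set (Ω' × Ω')) (hψ : IsAlgIso Xα X'α' ψ)
    (hψext : ∀ s ∈ X.S, algImage Xα ψ s = φ s)
    (hψα : ψ {(α, α)} = {(α', α')})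
    -- f ∈ Iso_{α,α'}(X,X',φ)
    (f : Ω → Ω') (hf : f ∈ IsoSet X X' φ) (hfα : f α = α')
    -- (i) X is schurian
    (hschur : Schurian X)
    -- the section 𝔖 = Δ/e with α_𝔖 ≠ ∅, and 𝔖' = 𝔖^f
    (Δ : Set Ω) (e : Set (Ω × Ω)) (hsec : IsSection X Δ e) (hα : α ∈ Δ)
    (Δ' : Set Ω') (e' : Set (Ω' × Ω')) (hΔ' : Δ' = f '' Δ) (he' : e' = relImage f e)
    -- (X_α)_𝔖 and (X'_{α'})_{𝔖'}
    (YS : CohCfg (Sec Δ e)) (hYS : IsSectionCfg Xα Δ e YS)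
    -- (ii) (X_α)_𝔖 is partly regular
    (hpr : PartlyRegular YS)
    (Y'S : CohCfg (Sec Δ' e')) (hY'S : IsSectionCfg X'α' Δ' e' Y'S)
    -- the induced algebraic isomorphism ψ_{𝔖,𝔖'}
    (ψS : Set (Sec Δ e × Sec Δ e) → Set (Sec Δ' e' × Sec Δ' e'))
    (hψS : ∀ s ∈ Xα.S, (secRel Δ e s).Nonempty →
      ψS (secRel Δ e s) = secRel Δ' e' (ψ s)) :
    {g : Sec Δ e → Sec Δ' e' | ∃ h ∈ IsoSet Xα X'α' ψ,
        h '' Δ = Δ' ∧ relImage h e = e' ∧ ∀ Γ : Sec Δ e, (g Γ).1 = h '' Γ.1} =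
    IsoSet YS Y'S ψS :=
  stmt_9_general X X' φ hφ α α' Xα hXα X'α' hX'α' ψ hψ hψext hψα f hf hfα hschur Δ e hsec hα Δ' e'
    hΔ' he' YS hYS hpr Y'S ψS hψS
end

section
/- Let X be a scheme on Ω satisfying the e₁/e₀-condition for parabolics e₀ ⊆ e₁, X' a scheme on Ω', and φ : X → X' an algebraic isomorphism, with e'₀ = φ(e₀), e'₁ = φ(e₁). Then f ∈ Iso(X, X', φ) if and only if f is induced by an e₁/e₀-admissible pair ({f_Δ}_{Δ ∈ Ω/e₁}, f₀) such that f₀ ∈ Iso(X_{Ω/e₀}, X'_{Ω'/e'₀}, φ_{Ω/e₀}) and f_Δ ∈ Iso(X_Δ, X'_{Δ'}, φ_{Δ,Δ'}) for all Δ ∈ Ω/e₁. -/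
open Set

universe u

section Aux

open CohCfg

variable {Ω Ω' : Type u}

lemma basis_eq (X : CohCfg Ω) {s t : Set (Ω × Ω)} (hs : s ∈ X.S) (ht : t ∈ X.S)
    {p : Ω × Ω} (hps : p ∈ s) (hpt : p ∈ t) : s = t := by
  by_contra h
  exact absurd (X.disj s hs t ht h) (Set.Nonempty.ne_empty ⟨p, hps, hpt⟩)

lemma mem_algImage_iff {X : CohCfg Ω} {φ : Set (Ω × Ω) → Set (Ω' × Ω')}
    {e : Set (Ω × Ω)} {q : Ω' × Ω'} :
    q ∈ algImage X φ e ↔ ∃ t, t ∈ X.S ∧ t ⊆ e ∧ q ∈ φ t := by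
  constructor
  · rintro ⟨u, ⟨t, ⟨ht, hte⟩, rfl⟩, hq⟩
    exact ⟨t, ht, hte, hq⟩
  · rintro ⟨t, ht, hte, hq⟩
    exact ⟨φ t, ⟨t, ⟨ht, hte⟩, rfl⟩, hq⟩

lemma subset_algImage (X : CohCfg Ω) (φ : Set (Ω × Ω) → Set (Ω' × Ω'))
    {s e : Set (Ω × Ω)} (hs : s ∈ X.S) (hse : s ⊆ e) :
    φ s ⊆ algImage X φ e :=
  Set.subset_sUnion_of_mem ⟨s, ⟨hs, hse⟩, rfl⟩

lemma mem_rel_iff_image (X : CohCfg Ω) {φ : Set (Ω × Ω) → Set (Ω' × Ω')} {f : Ω → Ω'}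
    (hinj : Function.Injective f)
    (hrel : ∀ s ∈ X.S, relImage f s = φ s) {e : Set (Ω × Ω)} (he : IsRelationOf X e)
    (a b : Ω) : (a, b) ∈ e ↔ (f a, f b) ∈ algImage X φ e := by
  constructor
  · intro hab
    obtain ⟨t, ht, hpt⟩ := X.cover (a, b)
    have hte : t ⊆ e := he t ht ⟨(a, b), hpt, hab⟩
    have hmem : (f a, f b) ∈ φ t := by
      rw [← hrel t ht]; exact ⟨(a, b), hpt, rfl⟩
    exact mem_algImage_iff.2 ⟨t, ht, hte, hmem⟩
  · intro h
    obtain ⟨t, ht, hte, hq⟩ := mem_algImage_iff.1 h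
    rw [← hrel t ht] at hq
    obtain ⟨⟨c, d⟩, hcd, heq⟩ := hq
    obtain rfl : c = a := hinj (congrArg Prod.fst heq)
    obtain rfl : d = b := hinj (congrArg Prod.snd heq)
    exact hte hcd

lemma transfer_equiv {f : Ω → Ω'} (hbij : Function.Bijective f) {e : Set (Ω × Ω)}
    {e' : Set (Ω' × Ω')} (hiff : ∀ a b : Ω, (a, b) ∈ e ↔ (f a, f b) ∈ e')
    (href : ∀ a : Ω, (a, a) ∈ e) (hsym : ∀ p ∈ e, (p.2, p.1) ∈ e)
    (htr : ∀ a b c : Ω, (a, b) ∈ e → (b, c) ∈ e → (a, c) ∈ e) :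
    (∀ a : Ω', (a, a) ∈ e') ∧ (∀ p ∈ e', (p.2, p.1) ∈ e') ∧
      (∀ a b c : Ω', (a, b) ∈ e' → (b, c) ∈ e' → (a, c) ∈ e') := by
  obtain ⟨hinj, hsurj⟩ := hbij
  refine ⟨?_, ?_, ?_⟩
  · intro a; obtain ⟨x, rfl⟩ := hsurj a; exact (hiff x x).1 (href x)
  · rintro ⟨a, b⟩ hab
    obtain ⟨x, rfl⟩ := hsurj a; obtain ⟨y, rfl⟩ := hsurj b
    exact (hiff y x).1 (hsym (x, y) ((hiff x y).2 hab))
  · intro a b c hab hbc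
    obtain ⟨x, rfl⟩ := hsurj a; obtain ⟨y, rfl⟩ := hsurj b
    obtain ⟨z, rfl⟩ := hsurj c
    exact (hiff x z).1 (htr x y z ((hiff x y).2 hab) ((hiff y z).2 hbc))

lemma image_eClass {f : Ω → Ω'} (hsurj : Function.Surjective f) {e : Set (Ω × Ω)}
    {e' : Set (Ω' × Ω')} (hiff : ∀ a b : Ω, (a, b) ∈ e ↔ (f a, f b) ∈ e') (a : Ω) :
    f '' eClass e a = eClass e' (f a) := by
  ext x
  constructor
  · rintro ⟨b, hb, rfl⟩; exact (hiff a b).1 hb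
  · intro hx
    obtain ⟨b, rfl⟩ := hsurj x
    exact ⟨b, (hiff a b).2 hx, rfl⟩

lemma eClass_eq {e : Set (Ω × Ω)} (hsym : ∀ p ∈ e, (p.2, p.1) ∈ e)
    (htr : ∀ a b c : Ω, (a, b) ∈ e → (b, c) ∈ e → (a, c) ∈ e) {a b : Ω}
    (hab : (a, b) ∈ e) : eClass e a = eClass e b := by
  ext x
  exact ⟨fun hx => htr _ _ _ (hsym (a, b) hab) hx, fun hx => htr _ _ _ hab hx⟩

lemma isRelationOf_algImage (X : CohCfg Ω) (X' : CohCfg Ω')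
    {φ : Set (Ω × Ω) → Set (Ω' × Ω')} (hmap : Set.MapsTo φ X.S X'.S) (e : Set (Ω × Ω)) :
    IsRelationOf X' (algImage X φ e) := by
  rintro u hu ⟨q, hq1, hq2⟩
  obtain ⟨t, ht, hte, hqt⟩ := mem_algImage_iff.1 hq2
  have hut : u = φ t := basis_eq X' hu (hmap ht) hq1 hqt
  intro x hx
  exact mem_algImage_iff.2 ⟨t, ht, hte, hut ▸ hx⟩

lemma hcl_class (X : CohCfg Ω) {e : Set (Ω × Ω)} (hrel : IsRelationOf X e)
    (hsym : ∀ p ∈ e, (p.2, p.1) ∈ e)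
    (htr : ∀ a b c : Ω, (a, b) ∈ e → (b, c) ∈ e → (a, c) ∈ e) (α : Ω) :
    ∀ s ∈ X.S, (restRel (eClass e α) s).Nonempty →
      ∀ a b : Ω, (a, b) ∈ s → a ∈ eClass e α → b ∈ eClass e α := by
  rintro s hs ⟨⟨x, y⟩, hxy⟩ a b hab ha
  have hse : s ⊆ e := hrel s hs ⟨(x.1, y.1), hxy, htr _ _ _ (hsym (α, x.1) x.2) y.2⟩
  exact htr _ _ _ ha (hse hab)

lemma exists_pair_left (X : CohCfg Ω) (hX : IsScheme X) {s : Set (Ω × Ω)}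
    (hs : s ∈ X.S) (a : Ω) : ∃ b, (a, b) ∈ s := by
  have : Finite Ω := X.finite
  have hdiag : {p : Ω × Ω | p.1 = p.2} ∈ X.S := hX
  obtain ⟨⟨c, d⟩, hcd⟩ := X.nonemp s hs
  have hsc : {p : Ω × Ω | (p.2, p.1) ∈ s} ∈ X.S := X.conv s hs
  have key : {γ : Ω | (a, γ) ∈ s ∧ (γ, a) ∈ {p : Ω × Ω | (p.2, p.1) ∈ s}}.ncard =
      {γ : Ω | (c, γ) ∈ s ∧ (γ, c) ∈ {p : Ω × Ω | (p.2, p.1) ∈ s}}.ncard :=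
    X.inum s hs _ hsc _ hdiag (a, a) rfl (c, c) rfl
  have hne : {γ : Ω | (c, γ) ∈ s ∧ (γ, c) ∈ {p : Ω × Ω | (p.2, p.1) ∈ s}}.Nonempty :=
    ⟨d, hcd, hcd⟩
  have hA : {γ : Ω | (a, γ) ∈ s ∧ (γ, a) ∈ {p : Ω × Ω | (p.2, p.1) ∈ s}}.Nonempty := by
    apply Set.nonempty_of_ncard_ne_zero
    rw [key]
    exact ((Set.ncard_pos (Set.toFinite _)).mpr hne).ne'
  obtain ⟨b, hb, -⟩ := hA
  exact ⟨b, hb⟩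

/-- Restriction of a coherent configuration to a suitable subset. -/
noncomputable def restCfg (X : CohCfg Ω) (Δ : Set Ω)
    (hcl : ∀ s ∈ X.S, (restRel Δ s).Nonempty → ∀ a b : Ω, (a, b) ∈ s → a ∈ Δ → b ∈ Δ) :
    CohCfg ↥Δ where
  S := {t | ∃ s ∈ X.S, t = restRel Δ s ∧ t.Nonempty}
  finite := by have := X.finite; exact Subtype.finite
  cover := by
    rintro ⟨x, y⟩
    obtain ⟨s, hs, hp⟩ := X.cover (x.1, y.1)
    exact ⟨restRel Δ s, ⟨s, hs, rfl, ⟨(x, y), hp⟩⟩, hp⟩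
  disj := by
    rintro t ⟨s, hs, rfl, -⟩ t' ⟨s', hs', rfl, -⟩ hne
    by_contra h
    obtain ⟨⟨x, y⟩, h1, h2⟩ := Set.nonempty_iff_ne_empty.2 h
    exact hne (by rw [basis_eq X hs hs' h1 h2])
  nonemp := by rintro t ⟨s, hs, rfl, hne⟩; exact hne
  diag := by
    rintro t ⟨s, hs, rfl, -⟩ ⟨⟨x, y⟩, hxy, hd⟩ ⟨u, v⟩ huv
    exact Subtype.ext (X.diag s hs ⟨(x.1, y.1), hxy, congrArg Subtype.val hd⟩ (u.1, v.1) huv)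
  conv := by
    rintro t ⟨s, hs, rfl, ⟨⟨x, y⟩, hxy⟩⟩
    exact ⟨{p : Ω × Ω | (p.2, p.1) ∈ s}, X.conv s hs, rfl, ⟨(y, x), hxy⟩⟩
  inum := by
    rintro r ⟨r₀, hr₀, rfl, hrne⟩ s ⟨s₀, hs₀, rfl, -⟩ t ⟨t₀, ht₀, rfl, -⟩ p hp q hq
    have key : ∀ z : ↥Δ × ↥Δ, z ∈ restRel Δ t₀ →
        {γ : ↥Δ | (z.1, γ) ∈ restRel Δ r₀ ∧ (γ, z.2) ∈ restRel Δ s₀}.ncard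
          = {γ : Ω | (z.1.1, γ) ∈ r₀ ∧ (γ, z.2.1) ∈ s₀}.ncard := by
      intro z hz
      have himg : Subtype.val '' {γ : ↥Δ | (z.1, γ) ∈ restRel Δ r₀ ∧ (γ, z.2) ∈ restRel Δ s₀}
          = {γ : Ω | (z.1.1, γ) ∈ r₀ ∧ (γ, z.2.1) ∈ s₀} := by
        ext γ
        constructor
        · rintro ⟨γ₀, ⟨h1, h2⟩, rfl⟩
          exact ⟨h1, h2⟩
        · rintro ⟨h1, h2⟩
          exact ⟨⟨γ, hcl r₀ hr₀ hrne _ _ h1 z.1.2⟩, ⟨h1, h2⟩, rfl⟩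
      calc {γ : ↥Δ | (z.1, γ) ∈ restRel Δ r₀ ∧ (γ, z.2) ∈ restRel Δ s₀}.ncard
          = (Subtype.val '' {γ : ↥Δ | (z.1, γ) ∈ restRel Δ r₀ ∧ (γ, z.2) ∈ restRel Δ s₀}).ncard :=
            (Set.ncard_image_of_injective _ Subtype.val_injective).symm
        _ = {γ : Ω | (z.1.1, γ) ∈ r₀ ∧ (γ, z.2.1) ∈ s₀}.ncard := by rw [himg]
    rw [key p hp, key q hq]
    exact X.inum r₀ hr₀ s₀ hs₀ t₀ ht₀ (p.1.1, p.2.1) hp (q.1.1, q.2.1) hq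

lemma restCfg_isRestriction (X : CohCfg Ω) (Δ : Set Ω)
    (hcl : ∀ s ∈ X.S, (restRel Δ s).Nonempty → ∀ a b : Ω, (a, b) ∈ s → a ∈ Δ → b ∈ Δ) :
    IsRestrictionCfg X Δ (restCfg X Δ hcl) := rfl

open Classical in
noncomputable def restIso (X : CohCfg Ω) (φ : Set (Ω × Ω) → Set (Ω' × Ω'))
    (Δ : Set Ω) (Δ' : Set Ω') (t : Set (↥Δ × ↥Δ)) : Set (↥Δ' × ↥Δ') :=
  if h : ∃ s, s ∈ X.S ∧ t = restRel Δ s ∧ t.Nonempty then restRel Δ' (φ h.choose) else ∅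

lemma restIso_eq (X : CohCfg Ω) (φ : Set (Ω × Ω) → Set (Ω' × Ω'))
    (Δ : Set Ω) (Δ' : Set Ω') {s : Set (Ω × Ω)} (hs : s ∈ X.S)
    (hne : (restRel Δ s).Nonempty) :
    restIso X φ Δ Δ' (restRel Δ s) = restRel Δ' (φ s) := by
  have h : ∃ s₀, s₀ ∈ X.S ∧ restRel Δ s = restRel Δ s₀ ∧ (restRel Δ s).Nonempty :=
    ⟨s, hs, rfl, hne⟩
  unfold restIso
  rw [dif_pos h]
  obtain ⟨hmem, heq, -⟩ := h.choose_spec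
  obtain ⟨⟨x, y⟩, hxy⟩ := hne
  have hxy2 : (x, y) ∈ restRel Δ h.choose := by rw [← heq]; exact hxy
  have hss : s = h.choose := basis_eq X hs hmem (p := (x.1, y.1)) hxy hxy2
  exact congrArg (fun u => restRel Δ' (φ u)) hss.symm

lemma relImage_eq_of_subset (X : CohCfg Ω) (X' : CohCfg Ω')
    {φ : Set (Ω × Ω) → Set (Ω' × Ω')} (hφ : Set.BijOn φ X.S X'.S)
    {f : Ω → Ω'} (hinj : Function.Injective f)
    (hsub : ∀ s ∈ X.S, φ s ⊆ relImage f s) : ∀ s ∈ X.S, relImage f s = φ s := by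
  intro s hs
  refine Set.Subset.antisymm ?_ (hsub s hs)
  rintro q ⟨⟨a, b⟩, hab, rfl⟩
  obtain ⟨u, hu, hq⟩ := X'.cover (f a, f b)
  obtain ⟨t, ht, rfl⟩ := hφ.surjOn hu
  obtain ⟨⟨c, d⟩, hcd, heq⟩ := hsub t ht hq
  obtain rfl : c = a := hinj (congrArg Prod.fst heq)
  obtain rfl : d = b := hinj (congrArg Prod.snd heq)
  obtain rfl : t = s := basis_eq X ht hs hcd hab
  exact hq

end Aux


open CohCfg in
/-- Theorem: for a scheme `X` satisfying the `e₁/e₀`-condition and an algebraic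
isomorphism `φ : X → X'`, a bijection `f : Ω → Ω'` lies in `Iso(X,X',φ)` iff it
is induced by an `e₁/e₀`-admissible pair `({f_Δ}, f₀)` with
`f₀ ∈ Iso(X₀, X'₀, φ₀)` and `f_Δ ∈ Iso(X_Δ, X'_{Δ'}, φ_{Δ,Δ'})`, i.e. iff `f`
is bijective, maps `e₀` to `e'₀` and `e₁` to `e'₁`, the map induced on `Ω/e₀`
lies in `Iso(X₀, X'₀, φ₀)`, and each restriction `f|_Δ` (`Δ` a class of `e₁`)
lies in `Iso(X_Δ, X'_{Δ'}, φ_{Δ,Δ'})`. -/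
theorem stmt_10 {Ω Ω' : Type u} (X : CohCfg Ω) (X' : CohCfg Ω')
    (hX : IsScheme X) (hX' : IsScheme X')
    (e0 e1 : Set (Ω × Ω)) (he0 : IsParabolic X e0) (he1 : IsParabolic X e1)
    (h01 : e0 ⊆ e1) (hw : WedgeCond X e0 e1)
    (φ : Set (Ω × Ω) → Set (Ω' × Ω')) (hφ : IsAlgIso X X' φ)
    (e0' e1' : Set (Ω' × Ω')) (he0' : e0' = algImage X φ e0)
    (he1' : e1' = algImage X φ e1)
    -- the quotient configurations X₀, X'₀ and the induced φ₀
    (Y0 : CohCfg (Sec (univ : Set Ω) e0)) (hY0 : IsSectionCfg X univ e0 Y0)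
    (Y0' : CohCfg (Sec (univ : Set Ω') e0')) (hY0' : IsSectionCfg X' univ e0' Y0')
    (φ0 : Set (Sec (univ : Set Ω) e0 × Sec (univ : Set Ω) e0) →
          Set (Sec (univ : Set Ω') e0' × Sec (univ : Set Ω') e0'))
    (hφ0 : ∀ s ∈ X.S, φ0 (secRel univ e0 s) = secRel univ e0' (φ s))
    (f : Ω → Ω') :
    f ∈ IsoSet X X' φ ↔
      (Function.Bijective f ∧
       (∀ a b : Ω, (a, b) ∈ e0 ↔ (f a, f b) ∈ e0') ∧
       (∀ a b : Ω, (a, b) ∈ e1 ↔ (f a, f b) ∈ e1') ∧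
       -- f₀ ∈ Iso(X₀, X'₀, φ₀), where f₀ is the map induced by f on Ω/e₀
       (∃ g ∈ IsoSet Y0 Y0' φ0,
          ∀ G : Sec (univ : Set Ω) e0, ∀ a ∈ G.1, f a ∈ (g G).1) ∧
       -- f_Δ ∈ Iso(X_Δ, X'_{Δ'}, φ_{Δ,Δ'}) for every class Δ of e₁ (Δ' = f(Δ))
       (∀ α : Ω,
        ∀ X1 : CohCfg ↥(eClass e1 α), IsRestrictionCfg X (eClass e1 α) X1 →
        ∀ X1' : CohCfg ↥(eClass e1' (f α)),
          IsRestrictionCfg X' (eClass e1' (f α)) X1' →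
        ∀ φ1 : Set (↥(eClass e1 α) × ↥(eClass e1 α)) →
               Set (↥(eClass e1' (f α)) × ↥(eClass e1' (f α))),
          (∀ s ∈ X.S, (restRel (eClass e1 α) s).Nonempty →
             φ1 (restRel (eClass e1 α) s) = restRel (eClass e1' (f α)) (φ s)) →
          ∃ h ∈ IsoSet X1 X1' φ1, ∀ d : ↥(eClass e1 α), (h d).1 = f d.1)) := by
  
  have finΩ : Finite Ω := X.finite
  have finΩ' : Finite Ω' := X'.finite
  have hY0eq : Y0.S = {t | ∃ s ∈ X.S, t = secRel univ e0 s ∧ t.Nonempty} := hY0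
  constructor
  · rintro ⟨hbij, hrel⟩
    have hiff0 : ∀ a b : Ω, (a, b) ∈ e0 ↔ (f a, f b) ∈ e0' := by
      intro a b; rw [he0']; exact mem_rel_iff_image X hbij.injective hrel he0.1 a b
    have hiff1 : ∀ a b : Ω, (a, b) ∈ e1 ↔ (f a, f b) ∈ e1' := by
      intro a b; rw [he1']; exact mem_rel_iff_image X hbij.injective hrel he1.1 a b
    obtain ⟨hre0', hsy0', htr0'⟩ :=
      transfer_equiv hbij hiff0 he0.2.1 he0.2.2.1 he0.2.2.2
    refine ⟨hbij, hiff0, hiff1, ?_, ?_⟩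
    · -- the quotient part
      have hgd : ∀ G : Sec (univ : Set Ω) e0, ∃ a' ∈ (univ : Set Ω'), f '' G.1 = eClass e0' a' := by
        intro G
        obtain ⟨a, -, ha⟩ := G.2
        exact ⟨f a, Set.mem_univ _, by rw [ha]; exact image_eClass hbij.surjective hiff0 a⟩
      refine ⟨fun G => ⟨f '' G.1, hgd G⟩, ⟨⟨?_, ?_⟩, ?_⟩, ?_⟩
      · intro G H hGH
        exact Subtype.ext ((Set.image_injective.mpr hbij.injective)
          (congrArg Subtype.val hGH))
      · intro G'
        obtain ⟨a', -, ha'⟩ := G'.2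
        obtain ⟨a, rfl⟩ := hbij.surjective a'
        refine ⟨⟨eClass e0 a, a, Set.mem_univ a, rfl⟩, Subtype.ext ?_⟩
        show f '' eClass e0 a = G'.1
        rw [ha']
        exact image_eClass hbij.surjective hiff0 a
      · intro t ht
        rw [hY0eq] at ht
        obtain ⟨s, hs, rfl, -⟩ := ht
        rw [hφ0 s hs]
        apply Set.Subset.antisymm
        · rintro q ⟨⟨G, H⟩, ⟨a, haG, b, hbH, hab⟩, rfl⟩
          refine ⟨f a, ⟨a, haG, rfl⟩, f b, ⟨b, hbH, rfl⟩, ?_⟩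
          rw [← hrel s hs]
          exact ⟨(a, b), hab, rfl⟩
        · rintro ⟨G', H'⟩ ⟨a', ha', b', hb', hab'⟩
          rw [← hrel s hs] at hab'
          obtain ⟨⟨a, b⟩, hab, heq⟩ := hab'
          have hfa : f a = a' := congrArg Prod.fst heq
          have hfb : f b = b' := congrArg Prod.snd heq
          obtain ⟨c', -, hc'⟩ := G'.2
          obtain ⟨d', -, hd'⟩ := H'.2
          have h1 : (c', f a) ∈ e0' := by
            rw [hfa]
            have hx : a' ∈ eClass e0' c' := hc' ▸ ha'
            exact hx
          have h2 : (d', f b) ∈ e0' := by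
            rw [hfb]
            have hx : b' ∈ eClass e0' d' := hd' ▸ hb'
            exact hx
          have hG' : G'.1 = eClass e0' (f a) := by rw [hc', eClass_eq hsy0' htr0' h1]
          have hH' : H'.1 = eClass e0' (f b) := by rw [hd', eClass_eq hsy0' htr0' h2]
          refine ⟨(⟨eClass e0 a, a, Set.mem_univ a, rfl⟩, ⟨eClass e0 b, b, Set.mem_univ b, rfl⟩),
            ⟨a, he0.2.1 a, b, he0.2.1 b, hab⟩, ?_⟩
          refine Prod.ext (Subtype.ext ?_) (Subtype.ext ?_)
          · show f '' eClass e0 a = G'.1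
            rw [hG']
            exact image_eClass hbij.surjective hiff0 a
          · show f '' eClass e0 b = H'.1
            rw [hH']
            exact image_eClass hbij.surjective hiff0 b
      · intro G a haG
        exact ⟨a, haG, rfl⟩
    · -- the restriction part
      intro α X1 hX1 X1' hX1' φ1 hφ1
      have hX1eq : X1.S = {t | ∃ s ∈ X.S, t = restRel (eClass e1 α) s ∧ t.Nonempty} := hX1
      refine ⟨fun d => ⟨f d.1, (hiff1 α d.1).1 d.2⟩, ⟨⟨?_, ?_⟩, ?_⟩, fun d => rfl⟩
      · intro d d' hdd
        exact Subtype.ext (hbij.injective (congrArg Subtype.val hdd))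
      · intro d'
        obtain ⟨c, hc⟩ := hbij.surjective d'.1
        have hcmem : c ∈ eClass e1 α := (hiff1 α c).2 (by rw [hc]; exact d'.2)
        exact ⟨⟨c, hcmem⟩, Subtype.ext hc⟩
      · intro t ht
        rw [hX1eq] at ht
        obtain ⟨s, hs, rfl, htne⟩ := ht
        rw [hφ1 s hs htne]
        apply Set.Subset.antisymm
        · rintro q ⟨⟨x, y⟩, hxy, rfl⟩
          show (f x.1, f y.1) ∈ φ s
          rw [← hrel s hs]
          exact ⟨(x.1, y.1), hxy, rfl⟩
        · rintro ⟨u, v⟩ huv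
          have huv' : (u.1, v.1) ∈ φ s := huv
          rw [← hrel s hs] at huv'
          obtain ⟨⟨a, b⟩, hab, heq⟩ := huv'
          have hfa : f a = u.1 := congrArg Prod.fst heq
          have hfb : f b = v.1 := congrArg Prod.snd heq
          have ha : a ∈ eClass e1 α := (hiff1 α a).2 (by rw [hfa]; exact u.2)
          have hb : b ∈ eClass e1 α := (hiff1 α b).2 (by rw [hfb]; exact v.2)
          exact ⟨(⟨a, ha⟩, ⟨b, hb⟩), hab, Prod.ext (Subtype.ext hfa) (Subtype.ext hfb)⟩
  · rintro ⟨hbij, hiff0, hiff1, ⟨g, hgmem, hcomp⟩, hres⟩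
    obtain ⟨hgbij, hgrel⟩ := hgmem
    obtain ⟨hre0', hsy0', htr0'⟩ :=
      transfer_equiv hbij hiff0 he0.2.1 he0.2.2.1 he0.2.2.2
    obtain ⟨hre1', hsy1', htr1'⟩ :=
      transfer_equiv hbij hiff1 he1.2.1 he1.2.2.1 he1.2.2.2
    have hrel1' : IsRelationOf X' e1' :=
      he1' ▸ isRelationOf_algImage X X' hφ.bijOn.mapsTo e1
    refine ⟨hbij, relImage_eq_of_subset X X' hφ.bijOn hbij.injective ?_⟩
    intro s hs
    rintro ⟨a', b'⟩ hmem
    obtain ⟨a, rfl⟩ := hbij.surjective a'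
    obtain ⟨b, rfl⟩ := hbij.surjective b'
    by_cases hcase : s ∩ e1 = ∅
    · -- s outside e₁ : use the quotient isomorphism and the e₁/e₀-condition
      have hrad : RadGE e0 s := hw s hs hcase
      have ht0 : secRel univ e0 s ∈ Y0.S := by
        rw [hY0eq]
        obtain ⟨⟨c, d⟩, hcd⟩ := X.nonemp s hs
        exact ⟨s, hs, rfl,
          ⟨(⟨eClass e0 c, c, Set.mem_univ c, rfl⟩, ⟨eClass e0 d, d, Set.mem_univ d, rfl⟩),
            c, he0.2.1 c, d, he0.2.1 d, hcd⟩⟩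
      have hmem' : ((⟨eClass e0' (f a), f a, Set.mem_univ _, rfl⟩ : Sec (univ : Set Ω') e0'),
          (⟨eClass e0' (f b), f b, Set.mem_univ _, rfl⟩ : Sec (univ : Set Ω') e0')) ∈
            secRel univ e0' (φ s) := ⟨f a, hre0' (f a), f b, hre0' (f b), hmem⟩
      rw [← hφ0 s hs, ← hgrel _ ht0] at hmem'
      obtain ⟨⟨G, H⟩, ⟨c, hcG, d, hdH, hcd⟩, heq⟩ := hmem'
      have h1 : (g G).1 = eClass e0' (f a) :=
        congrArg Subtype.val (congrArg Prod.fst heq)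
      have h2 : (g H).1 = eClass e0' (f b) :=
        congrArg Subtype.val (congrArg Prod.snd heq)
      have hfc : (f a, f c) ∈ e0' := by
        have hx : f c ∈ eClass e0' (f a) := h1 ▸ hcomp G c hcG
        exact hx
      have hfd : (f b, f d) ∈ e0' := by
        have hx : f d ∈ eClass e0' (f b) := h2 ▸ hcomp H d hdH
        exact hx
      have hac : (a, c) ∈ e0 := (hiff0 a c).2 hfc
      have hbd : (b, d) ∈ e0 := (hiff0 b d).2 hfd
      exact ⟨(a, b),
        hrad (c, d) hcd a b (he0.2.2.1 (a, c) hac) (he0.2.2.1 (b, d) hbd), rfl⟩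
    · -- s inside e₁ : use the restriction isomorphism on the class of a
      have hse1 : s ⊆ e1 := he1.1 s hs (Set.nonempty_iff_ne_empty.2 hcase)
      have hclX : ∀ s₁ ∈ X.S, (restRel (eClass e1 a) s₁).Nonempty →
          ∀ x y : Ω, (x, y) ∈ s₁ → x ∈ eClass e1 a → y ∈ eClass e1 a :=
        hcl_class X he1.1 he1.2.2.1 he1.2.2.2 a
      have hclX' : ∀ s₁ ∈ X'.S, (restRel (eClass e1' (f a)) s₁).Nonempty →
          ∀ x y : Ω', (x, y) ∈ s₁ → x ∈ eClass e1' (f a) → y ∈ eClass e1' (f a) :=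
        hcl_class X' hrel1' hsy1' htr1' (f a)
      obtain ⟨h, hhmem, hhval⟩ :=
        hres a (restCfg X (eClass e1 a) hclX) (restCfg_isRestriction X _ hclX)
          (restCfg X' (eClass e1' (f a)) hclX') (restCfg_isRestriction X' _ hclX')
          (restIso X φ (eClass e1 a) (eClass e1' (f a)))
          (fun s₁ hs₁ hne₁ => restIso_eq X φ _ _ hs₁ hne₁)
      obtain ⟨hhbij, hhrel⟩ := hhmem
      obtain ⟨γ, hγ⟩ := exists_pair_left X hX hs a
      have haΔ : a ∈ eClass e1 a := he1.2.1 a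
      have hγΔ : γ ∈ eClass e1 a := hse1 hγ
      have hne : (restRel (eClass e1 a) s).Nonempty := ⟨(⟨a, haΔ⟩, ⟨γ, hγΔ⟩), hγ⟩
      have htS : restRel (eClass e1 a) s ∈ (restCfg X (eClass e1 a) hclX).S :=
        ⟨s, hs, rfl, hne⟩
      have ha'Δ' : f a ∈ eClass e1' (f a) := hre1' (f a)
      have hb'Δ' : f b ∈ eClass e1' (f a) := by
        show (f a, f b) ∈ e1'
        rw [he1']
        exact subset_algImage X φ hs hse1 hmem
      have hmm : ((⟨f a, ha'Δ'⟩ : ↥(eClass e1' (f a))), (⟨f b, hb'Δ'⟩ : ↥(eClass e1' (f a)))) ∈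
          restRel (eClass e1' (f a)) (φ s) := hmem
      rw [← restIso_eq X φ (eClass e1 a) (eClass e1' (f a)) hs hne, ← hhrel _ htS] at hmm
      obtain ⟨⟨x, y⟩, hxy, heq⟩ := hmm
      have h1 : f x.1 = f a := by
        rw [← hhval x]; exact congrArg Subtype.val (congrArg Prod.fst heq)
      have h2 : f y.1 = f b := by
        rw [← hhval y]; exact congrArg Subtype.val (congrArg Prod.snd heq)
      refine ⟨(x.1, y.1), hxy, ?_⟩
      show (f x.1, f y.1) = (f a, f b)
      rw [h1, h2]
end
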